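/- arXiv:1311.1108 — 5 statements merged into one kernel-verified Lean document; each statement's English description precedes it below -/
import Mathlib

section
/- For every positive integer r and every tree T with a vertex-marking function m : V(T) → {0,1}, if T has at least 2r marked vertices, then for every vertex v of T there exist subtrees T₁ and T₂ of T such that (E(T₁), E(T₂)) is a partition of E(T), v ∈ V(T₂), and the number of marked vertices lying in T₁ but assigned to T₁ (under any assignment of marked vertices to exactly one of the two subtrees containing them) is between r and 2r. -/
/-!
For a vertex `u` of a tree and a neighbour `c`, the branch of `u` at `c` is the set of vertices
reached from `c` without passing through `u`; the branches at `u` partition the other vertices.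
Splitting at `u` along a set `S` of neighbours gives two subtrees sharing only `u`: `u` with the
branches at `S`, and `u` with the remaining branches. So it suffices to find `u` and `S`, with `v`
outside the branches at `S`, such that those branches carry between `r` and `2r` marks.

The branches at `v` carry all marks except possibly that of `v`, hence at least `r`. If each
carries at most `r`, collecting them one at a time stops between `r` and `2r`. Otherwise some
branch at `c` carries more than `r`, and its sub-branches at `c` carry all of those marks except
possibly that of `c`: repeat at `c`. The branches shrink, so this terminates.
-/

open Finset

namespace Finset

theorem exists_subset_le_sum_le_two_mul {ι : Type*} [DecidableEq ι] (C : Finset ι) (f : ι → ℕ)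
    {r : ℕ} (hf : ∀ i ∈ C, f i ≤ r) (hC : r ≤ ∑ i ∈ C, f i) :
    ∃ S ⊆ C, r ≤ ∑ i ∈ S, f i ∧ ∑ i ∈ S, f i ≤ 2 * r := by
  induction C using Finset.induction_on with
  | empty => exact ⟨∅, subset_rfl, by simpa using hC, by simp⟩
  | insert a C ha ih =>
    by_cases h : r ≤ ∑ i ∈ C, f i
    · obtain ⟨S, hSC, hS⟩ := ih (fun i hi => hf i (mem_insert_of_mem hi)) h
      exact ⟨S, hSC.trans (subset_insert a C), hS⟩
    · refine ⟨insert a C, subset_rfl, hC, ?_⟩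
      rw [sum_insert ha]
      have := hf a (mem_insert_self a C)
      omega

theorem card_inter_le_one_add_sum {α ι : Type*} [DecidableEq α] {s : Finset α} {a : α}
    {C : Finset ι} {t : ι → Finset α} (M : Finset α) (h : s ⊆ insert a (C.biUnion t)) :
    #(s ∩ M) ≤ 1 + ∑ i ∈ C, #(t i ∩ M) := by
  have hsub : s ∩ M ⊆ insert a (C.biUnion fun i => t i ∩ M) := by
    rw [← biUnion_inter]
    intro x hx
    have := h (mem_inter.1 hx).1
    grind
  have := (card_le_card hsub).trans (card_insert_le _ _)
  have := card_biUnion_le (s := C) (t := fun i => t i ∩ M)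
  omega

end Finset

namespace SimpleGraph

variable {V : Type*} {T : SimpleGraph V} {u c d w x y : V}

theorem deleteIncidenceSet_le_deleteEdges (huc : T.Adj u c) (hx : x ∈ s(u, c)) :
    T.deleteIncidenceSet x ≤ T.deleteEdges {s(u, c)} :=
  deleteEdges_anti (Set.singleton_subset_iff.2 ⟨huc, hx⟩)

theorem IsAcyclic.not_reachable_deleteEdges (hT : T.IsAcyclic) (huc : T.Adj u c) :
    ¬ (T.deleteEdges {s(u, c)}).Reachable u c :=
  isBridge_iff.1 (isAcyclic_iff_forall_adj_isBridge.1 hT huc)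

theorem edgeSet_induce_insert_union_compl {U : Set V}
    (hU : ∀ x y, T.Adj x y → x ∈ U → y ≠ u → y ∈ U) :
    ((⊤ : T.Subgraph).induce (insert u U)).edgeSet ∪
      ((⊤ : T.Subgraph).induce (insert u Uᶜ)).edgeSet = T.edgeSet := by
  refine subset_antisymm (Set.union_subset (Subgraph.edgeSet_subset _) (Subgraph.edgeSet_subset _))
    fun e he => ?_
  induction e using Sym2.ind with
  | h x y =>
    have hxy := hU x y he
    have hyx := hU y x he.symm
    simp only [Set.mem_union, Subgraph.mem_edgeSet, Subgraph.induce_adj, Subgraph.top_adj,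
      Set.mem_insert_iff, Set.mem_compl_iff]
    tauto

theorem disjoint_edgeSet_induce_insert_compl (U : Set V) (u : V) :
    Disjoint ((⊤ : T.Subgraph).induce (insert u U)).edgeSet
      ((⊤ : T.Subgraph).induce (insert u Uᶜ)).edgeSet := by
  refine Set.disjoint_left.2 fun e he₁ he₂ => ?_
  induction e using Sym2.ind with
  | h x y =>
    simp only [Subgraph.mem_edgeSet, Subgraph.induce_adj, Subgraph.top_adj, Set.mem_insert_iff,
      Set.mem_compl_iff] at he₁ he₂
    have hx : x = u := by tauto
    have hy : y = u := by tauto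
    exact he₁.2.2.ne (hx.trans hy.symm)

section Branch

variable [Fintype V]

open Classical in
noncomputable def branch (T : SimpleGraph V) (u c : V) : Finset V :=
  {w | (T.deleteIncidenceSet u).Reachable c w}

theorem mem_branch : w ∈ T.branch u c ↔ (T.deleteIncidenceSet u).Reachable c w := by
  simp [branch]

theorem self_mem_branch : c ∈ T.branch u c := mem_branch.2 .rfl

theorem notMem_branch (hcu : c ≠ u) : u ∉ T.branch u c := by
  rintro hu
  obtain ⟨p⟩ := (mem_branch.1 hu).symm
  cases p with
  | nil => exact hcu rfl
  | cons h _ => exact (deleteIncidenceSet_adj.1 h).2.1 rfl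

theorem mem_branch_of_adj (hcu : c ≠ u) (hx : x ∈ T.branch u c) (hxy : T.Adj x y) (hyu : y ≠ u) :
    y ∈ T.branch u c := by
  have hxu : x ≠ u := ne_of_mem_of_not_mem hx (notMem_branch hcu)
  exact mem_branch.2 <| (mem_branch.1 hx).trans (deleteIncidenceSet_adj.2 ⟨hxy, hxu, hyu⟩).reachable

theorem Connected.exists_adj_mem_branch (hT : T.Connected) (hwu : w ≠ u) :
    ∃ c, T.Adj u c ∧ w ∈ T.branch u c := by
  obtain ⟨p⟩ := hT.preconnected w u
  induction p with
  | nil => exact absurd rfl hwu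
  | @cons w x u hwx p ih =>
    by_cases hxu : x = u
    · subst hxu
      exact ⟨w, hwx.symm, self_mem_branch⟩
    · obtain ⟨c, huc, hxc⟩ := ih hxu
      exact ⟨c, huc, mem_branch_of_adj huc.ne' hxc hwx.symm hwu⟩

theorem reachable_deleteEdges_of_mem_branch (huc : T.Adj u c) (hx : x ∈ s(u, c))
    (hw : w ∈ T.branch x y) :
    (T.deleteEdges {s(u, c)}).Reachable y w :=
  (mem_branch.1 hw).mono (deleteIncidenceSet_le_deleteEdges huc hx)

theorem IsAcyclic.disjoint_branch (hT : T.IsAcyclic) (huc : T.Adj u c) (hud : T.Adj u d)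
    (hcd : c ≠ d) : Disjoint (T.branch u c) (T.branch u d) := by
  refine Finset.disjoint_left.2 fun w hwc hwd => hT.not_reachable_deleteEdges huc ?_
  have hud' : (T.deleteEdges {s(u, c)}).Adj u d := by simp [hud, hcd.symm, hud.ne']
  exact hud'.reachable.trans <|
    (reachable_deleteEdges_of_mem_branch huc (Sym2.mem_mk_left u c) hwd).trans
    (reachable_deleteEdges_of_mem_branch huc (Sym2.mem_mk_left u c) hwc).symm

theorem IsAcyclic.disjoint_branch_swap (hT : T.IsAcyclic) (huc : T.Adj u c) :
    Disjoint (T.branch u c) (T.branch c u) :=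
  Finset.disjoint_left.2 fun _ hwc hwu => hT.not_reachable_deleteEdges huc <|
    (reachable_deleteEdges_of_mem_branch huc (Sym2.mem_mk_right u c) hwu).trans
      (reachable_deleteEdges_of_mem_branch huc (Sym2.mem_mk_left u c) hwc).symm

theorem IsTree.branch_subset_branch (hT : T.IsTree) (huc : T.Adj u c) (hcd : T.Adj c d)
    (hdu : d ≠ u) : T.branch c d ⊆ T.branch u c := by
  intro w hw
  have hwu : w ≠ u := ne_of_mem_of_not_mem hw <|
    Finset.disjoint_left.1 (hT.isAcyclic.disjoint_branch huc.symm hcd hdu.symm) self_mem_branch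
  obtain ⟨c', huc', hwc'⟩ := hT.connected.exists_adj_mem_branch hwu
  obtain rfl | hc' := eq_or_ne c' c
  · exact hwc'
  -- otherwise `u - c' ~ w ~ d - c` would join `u` to `c` without the edge `uc`
  refine (hT.isAcyclic.not_reachable_deleteEdges huc ?_).elim
  have huc'' : (T.deleteEdges {s(u, c)}).Adj u c' := by simp [huc', hc', huc'.ne']
  have hdc : (T.deleteEdges {s(u, c)}).Adj d c := by simp [hcd.symm, hdu, hcd.ne']
  exact huc''.reachable.trans <|
    (reachable_deleteEdges_of_mem_branch huc (Sym2.mem_mk_left u c) hwc').trans <|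
    (reachable_deleteEdges_of_mem_branch huc (Sym2.mem_mk_right u c) hw).symm.trans hdc.reachable

theorem IsTree.card_branch_lt (hT : T.IsTree) (huc : T.Adj u c) (hcd : T.Adj c d) (hdu : d ≠ u) :
    #(T.branch c d) < #(T.branch u c) :=
  card_lt_card <| (ssubset_iff_of_subset (hT.branch_subset_branch huc hcd hdu)).2
    ⟨c, self_mem_branch, notMem_branch hcd.ne'⟩

theorem IsTree.branch_subset_insert_biUnion [DecidableEq V] (hT : T.IsTree) (huc : T.Adj u c)
    {C : Finset V} (hC : ∀ d, T.Adj c d → d ≠ u → d ∈ C) :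
    T.branch u c ⊆ insert c (C.biUnion (T.branch c)) := by
  intro w hw
  rw [mem_insert, mem_biUnion]
  refine or_iff_not_imp_left.2 fun hwc => ?_
  obtain ⟨d, hcd, hwd⟩ := hT.connected.exists_adj_mem_branch hwc
  obtain rfl | hdu := eq_or_ne d u
  · exact (Finset.disjoint_left.1 (hT.isAcyclic.disjoint_branch_swap huc) hw hwd).elim
  · exact ⟨d, hC d hcd hdu, hwd⟩

theorem Connected.insert_biUnion_branch_eq_univ [DecidableEq V] (hT : T.Connected) (u : V)
    {C : Finset V} (hC : ∀ c, T.Adj u c → c ∈ C) : insert u (C.biUnion (T.branch u)) = univ := by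
  refine eq_univ_of_forall fun w => ?_
  rw [mem_insert, mem_biUnion]
  refine or_iff_not_imp_left.2 fun hwu => ?_
  obtain ⟨c, huc, hwc⟩ := hT.exists_adj_mem_branch hwu
  exact ⟨c, hC c huc, hwc⟩

theorem connected_induce_insert_branch (huc : T.Adj u c) :
    (T.induce (insert u (T.branch u c : Set V))).Connected := by
  have hsupp : (T.branch u c : Set V) = ((T.deleteIncidenceSet u).connectedComponentMk c).supp := by
    ext w
    simp [mem_branch, ConnectedComponent.eq, reachable_comm]
  have hconn : (T.induce (T.branch u c : Set V)).Connected := by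
    rw [hsupp]
    exact (ConnectedComponent.maximal_connected_induce_supp _).prop.mono
      (comap_monotone _ (deleteIncidenceSet_le T u))
  rw [Set.insert_eq]
  exact connected_induce_union Preconnected.of_subsingleton hconn.preconnected rfl
    self_mem_branch huc

theorem connected_induce_of_forall_mem_branch {X : Set V} (hu : u ∈ X)
    (hX : ∀ w ∈ X, w ≠ u → ∃ c, T.Adj u c ∧ w ∈ T.branch u c ∧ ↑(T.branch u c) ⊆ X) :
    ((⊤ : T.Subgraph).induce X).Connected := by
  rw [← connected_induce_iff]
  refine induce_connected_of_patches u hu fun {w} hw => ?_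
  obtain rfl | hwu := eq_or_ne w u
  · exact ⟨{w}, by simpa using hw, rfl, rfl, .rfl⟩
  · obtain ⟨c, huc, hwc, hcX⟩ := hX w hw hwu
    exact ⟨_, Set.insert_subset hu hcX, Set.mem_insert _ _, Set.mem_insert_of_mem _ hwc,
      (connected_induce_insert_branch huc).preconnected _ _⟩

end Branch

section GoodBranchSet

variable [Fintype V] [DecidableEq V] {M : Finset V} {r : ℕ} {v : V}

variable (T M r v) in
def IsGoodBranchSet (u : V) (S : Finset V) : Prop :=
  (∀ c ∈ S, T.Adj u c ∧ v ∉ T.branch u c) ∧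
    r ≤ ∑ c ∈ S, #(T.branch u c ∩ M) ∧ ∑ c ∈ S, #(T.branch u c ∩ M) ≤ 2 * r

theorem exists_isGoodBranchSet_of_le_sum (C : Finset V)
    (hC : ∀ c ∈ C, T.Adj u c ∧ v ∉ T.branch u c) (hsum : r ≤ ∑ c ∈ C, #(T.branch u c ∩ M))
    (hheavy : ∀ c ∈ C, r < #(T.branch u c ∩ M) → ∃ u S, T.IsGoodBranchSet M r v u S) :
    ∃ u S, T.IsGoodBranchSet M r v u S := by
  by_cases h : ∃ c ∈ C, r < #(T.branch u c ∩ M)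
  · obtain ⟨c, hc, hcr⟩ := h
    exact hheavy c hc hcr
  · push Not at h
    obtain ⟨S, hSC, hS⟩ := exists_subset_le_sum_le_two_mul C _ h hsum
    exact ⟨u, S, fun c hc => hC c (hSC hc), hS⟩

theorem IsTree.exists_isGoodBranchSet_of_lt_card (hT : T.IsTree) {u c : V} (huc : T.Adj u c)
    (hv : v ∉ T.branch u c) (hr : r < #(T.branch u c ∩ M)) :
    ∃ u S, T.IsGoodBranchSet M r v u S := by
  classical
  have hchild : ∀ d ∈ (T.neighborFinset c).erase u,
      T.Adj c d ∧ v ∉ T.branch c d ∧ #(T.branch c d) < #(T.branch u c) := by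
    intro d hd
    obtain ⟨hdu, hcd⟩ : d ≠ u ∧ T.Adj c d := by simpa using hd
    exact ⟨hcd, fun h => hv (hT.branch_subset_branch huc hcd hdu h),
      hT.card_branch_lt huc hcd hdu⟩
  refine exists_isGoodBranchSet_of_le_sum _ (fun d hd => ⟨(hchild d hd).1, (hchild d hd).2.1⟩)
    ?_ fun d hd hrd => hT.exists_isGoodBranchSet_of_lt_card (hchild d hd).1 (hchild d hd).2.1 hrd
  have := card_inter_le_one_add_sum M <|
    hT.branch_subset_insert_biUnion huc (C := (T.neighborFinset c).erase u) fun d hcd hdu => by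
      simp [hcd, hdu]
  omega
termination_by #(T.branch u c)
decreasing_by exact (hchild d hd).2.2

theorem IsTree.exists_isGoodBranchSet (hT : T.IsTree) (hM : r ≤ #M - 1) (v : V) :
    ∃ u S, T.IsGoodBranchSet M r v u S := by
  classical
  have hnbr : ∀ c ∈ T.neighborFinset v, T.Adj v c ∧ v ∉ T.branch v c := fun c hc =>
    have hvc := (mem_neighborFinset _ _ _).1 hc
    ⟨hvc, notMem_branch hvc.ne'⟩
  refine exists_isGoodBranchSet_of_le_sum _ hnbr ?_ fun c hc hrc =>
    hT.exists_isGoodBranchSet_of_lt_card (hnbr c hc).1 (hnbr c hc).2 hrc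
  have := card_inter_le_one_add_sum M
    (hT.connected.insert_biUnion_branch_eq_univ v (C := T.neighborFinset v) fun c hc => by
      simpa using hc).ge
  rw [univ_inter] at this
  omega

theorem IsTree.exists_partition_of_isGoodBranchSet (hT : T.IsTree) {u : V} {S : Finset V}
    (h : T.IsGoodBranchSet M r v u S) :
    ∃ T₁ T₂ : T.Subgraph, T₁.Connected ∧ T₂.Connected ∧
      T₁.edgeSet ∪ T₂.edgeSet = T.edgeSet ∧ Disjoint T₁.edgeSet T₂.edgeSet ∧ v ∈ T₂.verts ∧
      ∃ M₁ ⊆ M, (∀ w ∈ M₁, w ∈ T₁.verts) ∧ (∀ w ∈ M, w ∉ M₁ → w ∈ T₂.verts) ∧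
        r ≤ #M₁ ∧ #M₁ ≤ 2 * r := by
  obtain ⟨hS, hr₁, hr₂⟩ := h
  set U := S.biUnion (T.branch u)
  have hcard : #(U ∩ M) = ∑ c ∈ S, #(T.branch u c ∩ M) := by
    rw [biUnion_inter, card_biUnion fun c hc d hd hcd =>
      (hT.isAcyclic.disjoint_branch (hS c hc).1 (hS d hd).1 hcd).mono inter_subset_left
        inter_subset_left]
  have hvU : v ∉ U := fun hv => by
    obtain ⟨c, hc, hvc⟩ := mem_biUnion.1 hv
    exact (hS c hc).2 hvc
  refine ⟨(⊤ : T.Subgraph).induce (insert u U), (⊤ : T.Subgraph).induce (insert u (↑U)ᶜ),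
    ?_, ?_, edgeSet_induce_insert_union_compl ?_, disjoint_edgeSet_induce_insert_compl _ _,
    Set.mem_insert_of_mem _ hvU, U ∩ M, inter_subset_right,
    fun w hw => Set.mem_insert_of_mem _ (mem_inter.1 hw).1,
    fun w hwM hw => Set.mem_insert_of_mem _ fun hwU => hw (mem_inter.2 ⟨hwU, hwM⟩),
    hcard ▸ hr₁, hcard ▸ hr₂⟩
  · refine connected_induce_of_forall_mem_branch (Set.mem_insert _ _) fun w hw hwu => ?_
    obtain ⟨c, hc, hwc⟩ := mem_biUnion.1 ((Set.mem_insert_iff.1 hw).resolve_left hwu)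
    exact ⟨c, (hS c hc).1, hwc, fun x hx => Set.mem_insert_of_mem _ (mem_biUnion.2 ⟨c, hc, hx⟩)⟩
  · refine connected_induce_of_forall_mem_branch (Set.mem_insert _ _) fun w hw hwu => ?_
    have hwU : w ∉ U := (Set.mem_insert_iff.1 hw).resolve_left hwu
    obtain ⟨c, huc, hwc⟩ := hT.connected.exists_adj_mem_branch hwu
    have hcS : c ∉ S := fun hc => hwU (mem_biUnion.2 ⟨c, hc, hwc⟩)
    have hdisj : Disjoint (T.branch u c) U := (disjoint_biUnion_right _ _ _).2 fun d hd =>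
      hT.isAcyclic.disjoint_branch huc (hS d hd).1 (ne_of_mem_of_not_mem hd hcS).symm
    exact ⟨c, huc, hwc, fun x hx => Set.mem_insert_of_mem _ (Finset.disjoint_left.1 hdisj hx)⟩
  · intro x y hxy hx hyu
    obtain ⟨c, hc, hxc⟩ := mem_biUnion.1 hx
    exact mem_biUnion.2 ⟨c, hc, mem_branch_of_adj (hS c hc).1.ne' hxc hxy hyu⟩

end GoodBranchSet

end SimpleGraph

theorem stmt0_general {V : Type} [Fintype V] [DecidableEq V] (r : ℕ)
    (T : SimpleGraph V) (hT : T.IsTree) (m : V → Bool)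
    (hm : 2 * r ≤ (Finset.univ.filter fun v => m v = true).card) :
    ∀ v : V, ∃ T₁ T₂ : T.Subgraph, T₁.Connected ∧ T₂.Connected ∧
      T₁.edgeSet ∪ T₂.edgeSet = T.edgeSet ∧ Disjoint T₁.edgeSet T₂.edgeSet ∧
      v ∈ T₂.verts ∧
      ∃ M₁ : Finset V, (∀ u ∈ M₁, m u = true ∧ u ∈ T₁.verts) ∧
        (∀ u, m u = true → u ∉ M₁ → u ∈ T₂.verts) ∧
        r ≤ M₁.card ∧ M₁.card ≤ 2 * r := by
  intro v
  obtain ⟨u, S, hS⟩ :=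
    hT.exists_isGoodBranchSet (M := Finset.univ.filter fun v => m v = true) (r := r) (by omega) v
  obtain ⟨T₁, T₂, hT₁, hT₂, hunion, hdisj, hv, M₁, hM₁, h₁, h₂, hr⟩ :=
    hT.exists_partition_of_isGoodBranchSet hS
  exact ⟨T₁, T₂, hT₁, hT₂, hunion, hdisj, hv, M₁,
    fun w hw => ⟨(Finset.mem_filter.1 (hM₁ hw)).2, h₁ w hw⟩,
    fun w hw => h₂ w (by simpa using hw), hr⟩

/-- For every positive integer r and every marked tree (T, m) with at least 2r marked
vertices, and every vertex v, there is an r-good partition of root v: two subtrees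
whose edge sets partition E(T), with v ∈ T₂, and an assignment of the marked vertices
(M₁ going to T₁, the rest to T₂) such that T₁ receives between r and 2r marked vertices. -/
theorem stmt0 {V : Type} [Fintype V] [DecidableEq V] (r : ℕ) (hr : 0 < r)
    (T : SimpleGraph V) (hT : T.IsTree) (m : V → Bool)
    (hm : 2 * r ≤ (Finset.univ.filter fun v => m v = true).card) :
    ∀ v : V, ∃ T₁ T₂ : T.Subgraph, T₁.Connected ∧ T₂.Connected ∧
      T₁.edgeSet ∪ T₂.edgeSet = T.edgeSet ∧ Disjoint T₁.edgeSet T₂.edgeSet ∧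
      v ∈ T₂.verts ∧
      ∃ M₁ : Finset V, (∀ u ∈ M₁, m u = true ∧ u ∈ T₁.verts) ∧
        (∀ u, m u = true → u ∉ M₁ → u ∈ T₂.verts) ∧
        r ≤ M₁.card ∧ M₁.card ≤ 2 * r :=
  stmt0_general r T hT m hm
end

section
/- Let k and r be positive integers and let G be a 2-connected (multi)graph with maximum degree at least 2kr. Then G contains k pairwise edge-disjoint subgraphs, each of which contains θ_r as a contraction, where θ_r is the multigraph with two vertices joined by r parallel edges. -/
/-!
Pick a vertex `v` of degree at least `2kr`. Then `G - v` is connected and contains at least `2kr`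
neighbours of `v`, the terminals. It suffices to find in `G - v` connected vertex sets `C₁, …, Cₖ`,
any two sharing at most one vertex, with disjoint sets `Nᵢ ⊆ Cᵢ` of `r` terminals each: contracting
`Cᵢ` and joining it to `v` by the `r` edges to `Nᵢ` gives a model of `θ_r`, and these models are
edge-disjoint.

The sets are cut off one at a time from a connected set `W` with a root `ρ`. Either some union `X`
of components of `W - ρ` carries between `r` and `2r - 1` terminals (take a union with the fewest
terminals that still has `r`), and then `X ∪ {ρ}` and `W - X` are both connected; or some component
carries more than `r` terminals, and we recurse into it, rooted at a neighbour of `ρ`. A piece uses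
at most `2r` terminals, its attachment vertex included, so `k` pieces fit.
-/

open SimpleGraph

/-- `H` is a model of `θ_r` in `G`: its vertex set splits into two disjoint
connected parts with exactly `r` edges of `H` between them (so contracting
each part yields the multigraph with two vertices and `r` parallel edges). -/
def IsThetaModel {V : Type} (r : ℕ) (G : SimpleGraph V) (H : G.Subgraph) : Prop :=
  ∃ A B : Set V, A ∪ B = H.verts ∧ Disjoint A B ∧
    (H.induce A).Connected ∧ (H.induce B).Connected ∧
    {e ∈ H.edgeSet | ∃ a ∈ A, ∃ b ∈ B, e = s(a, b)}.ncard = r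

/-- `G` contains `k` pairwise edge-disjoint models of `θ_r`. -/
def HasEdgePacking {V : Type} (r : ℕ) (G : SimpleGraph V) (k : ℕ) : Prop :=
  ∃ H : Fin k → G.Subgraph, (∀ i, IsThetaModel r G (H i)) ∧
    ∀ i j, i ≠ j → Disjoint (H i).edgeSet (H j).edgeSet

/-- `G` is 2-connected: connected, at least 3 vertices, and removing any
single vertex leaves it connected. -/
def Biconnected {V : Type} [Fintype V] (G : SimpleGraph V) : Prop :=
  G.Connected ∧ 3 ≤ Fintype.card V ∧
    ∀ v : V, (((⊤ : G.Subgraph).deleteVerts {v}).coe).Connected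

open Function

namespace SimpleGraph

variable {V : Type*} {G : SimpleGraph V}

lemma exists_walk_support_subset_of_connected_induce {W : Set V} (hW : (G.induce W).Connected)
    {x y : V} (hx : x ∈ W) (hy : y ∈ W) : ∃ p : G.Walk x y, ∀ z ∈ p.support, z ∈ W := by
  rw [connected_induce_iff, Subgraph.connected_iff_forall_exists_walk_subgraph] at hW
  obtain ⟨p, hp⟩ := hW.2 hx hy
  exact ⟨p, fun z hz => hp.1 ((Walk.mem_verts_toSubgraph p).mpr hz)⟩

def IsUnionOfComponents (G : SimpleGraph V) (U X : Set V) : Prop :=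
  X ⊆ U ∧ ∀ ⦃x y⦄, x ∈ X → y ∈ U → G.Adj x y → y ∈ X

lemma isUnionOfComponents_self (U : Set V) : G.IsUnionOfComponents U U :=
  ⟨subset_rfl, fun _ _ _ hy _ => hy⟩

namespace IsUnionOfComponents

variable {U W X Y : Set V} {ρ : V}

lemma sdiff (hX : G.IsUnionOfComponents U X) (hY : G.IsUnionOfComponents U Y) :
    G.IsUnionOfComponents U (X \ Y) :=
  ⟨fun _ hx => hX.1 hx.1, fun _ _ hx hy hxy =>
    ⟨hX.2 hx.1 hy hxy, fun hyY => hx.2 (hY.2 hyY (hX.1 hx.1) hxy.symm)⟩⟩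

lemma support_subset (hX : G.IsUnionOfComponents U X) {x y : V} (p : G.Walk x y) (hx : x ∈ X)
    (hp : ∀ z ∈ p.support, z ∈ U) : ∀ z ∈ p.support, z ∈ X := by
  induction p with
  | nil => simpa using hx
  | cons h p ih =>
    simp only [Walk.support_cons, List.mem_cons, forall_eq_or_imp] at hp ⊢
    exact ⟨hx, ih (hX.2 hx (hp.2 _ p.start_mem_support) h) hp.2⟩

-- Cut the walk at its first visit to `ρ`: up to there it runs in `W \ {ρ}`, hence in `X`.
lemma exists_walk_insert_of_walk (hX : G.IsUnionOfComponents (W \ {ρ}) X) {x : V} (p : G.Walk x ρ)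
    (hp : ∀ z ∈ p.support, z ∈ W) (hx : x ∈ X) :
    ∃ q : G.Walk x ρ, ∀ z ∈ q.support, z ∈ insert ρ X := by
  induction p with
  | nil => exact ⟨Walk.nil, by simp⟩
  | @cons x y ρ h p ih =>
    simp only [Walk.support_cons, List.mem_cons, forall_eq_or_imp] at hp
    by_cases hy : y = ρ
    · subst hy
      exact ⟨Walk.cons h Walk.nil, by simp [hx]⟩
    · obtain ⟨q, hq⟩ := ih hX hp.2 (hX.2 hx ⟨hp.2 _ p.start_mem_support, hy⟩ h)
      exact ⟨Walk.cons h q, by simpa [hx] using hq⟩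

lemma exists_walk_insert (hW : (G.induce W).Connected) (hρ : ρ ∈ W)
    (hX : G.IsUnionOfComponents (W \ {ρ}) X) {x : V} (hx : x ∈ X) :
    ∃ q : G.Walk x ρ, ∀ z ∈ q.support, z ∈ insert ρ X := by
  obtain ⟨p, hp⟩ := exists_walk_support_subset_of_connected_induce hW (hX.1 hx).1 hρ
  exact hX.exists_walk_insert_of_walk p hp hx

lemma connected_induce_insert (hW : (G.induce W).Connected) (hρ : ρ ∈ W)
    (hX : G.IsUnionOfComponents (W \ {ρ}) X) : (G.induce (insert ρ X)).Connected := by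
  rw [connected_iff_exists_forall_reachable]
  refine ⟨⟨ρ, Set.mem_insert _ _⟩, ?_⟩
  rintro ⟨x, rfl | hx⟩
  · rfl
  obtain ⟨q, hq⟩ := hX.exists_walk_insert hW hρ hx
  exact ⟨(q.induce _ hq).reverse⟩

lemma connected_induce_sdiff (hW : (G.induce W).Connected) (hρ : ρ ∈ W)
    (hX : G.IsUnionOfComponents (W \ {ρ}) X) : (G.induce (W \ X)).Connected := by
  have hρX : ρ ∉ X := fun h => (hX.1 h).2 rfl
  have hWX : W \ X = insert ρ ((W \ {ρ}) \ X) := by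
    ext z
    by_cases hz : z = ρ
    · subst hz; simp [hρ, hρX]
    · simp [hz]
  rw [hWX]
  exact ((isUnionOfComponents_self _).sdiff hX).connected_induce_insert hW hρ

lemma exists_adj (hW : (G.induce W).Connected) (hρ : ρ ∈ W)
    (hX : G.IsUnionOfComponents (W \ {ρ}) X) {x : V} (hx : x ∈ X) : ∃ y ∈ X, G.Adj ρ y := by
  obtain ⟨q, hq⟩ := hX.exists_walk_insert hW hρ hx
  have hq_nil : ¬q.Nil := fun h => (hX.1 hx).2 h.eq
  refine ⟨q.penultimate, ?_, (q.adj_penultimate hq_nil).symm⟩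
  exact (hq _ (q.getVert_mem_support _)).resolve_left (q.adj_penultimate hq_nil).ne

end IsUnionOfComponents

def componentIn (G : SimpleGraph V) (U : Set V) (x : V) : Set V :=
  {y | ∃ p : G.Walk x y, ∀ z ∈ p.support, z ∈ U}

variable {U : Set V} {x : V}

lemma mem_componentIn_self (hx : x ∈ U) : x ∈ G.componentIn U x :=
  ⟨Walk.nil, by simpa using hx⟩

lemma isUnionOfComponents_componentIn : G.IsUnionOfComponents U (G.componentIn U x) := by
  refine ⟨fun y ⟨p, hp⟩ => hp _ p.end_mem_support, fun y z ⟨p, hp⟩ hz hyz => ?_⟩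
  exact ⟨p.concat hyz, by simpa [Walk.support_concat, or_imp, forall_and, hz] using hp⟩

lemma connected_induce_componentIn (hx : x ∈ U) : (G.induce (G.componentIn U x)).Connected := by
  rw [connected_iff_exists_forall_reachable]
  refine ⟨⟨x, mem_componentIn_self hx⟩, fun ⟨y, p, hp⟩ => ?_⟩
  exact ⟨p.induce _ (isUnionOfComponents_componentIn.support_subset p (mem_componentIn_self hx) hp)⟩

section Finite

variable [Finite V]

lemma ncard_inter_le_ncard_inter_sdiff_singleton_add_one (S W : Set V) (a : V) :
    (S ∩ W).ncard ≤ (S ∩ (W \ {a})).ncard + 1 := by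
  have := Set.ncard_le_ncard_sdiff_add_ncard (S ∩ W) {a}
  rwa [Set.ncard_singleton, Set.inter_sdiff_assoc] at this

theorem exists_isUnionOfComponents_or_componentIn {r : ℕ} (hr : 0 < r) {U S : Set V}
    (hS : r ≤ (S ∩ U).ncard) :
    (∃ X, G.IsUnionOfComponents U X ∧ r ≤ (S ∩ X).ncard ∧ (S ∩ X).ncard < 2 * r) ∨
      ∃ s ∈ U, r < (S ∩ G.componentIn U s).ncard := by
  obtain ⟨X, ⟨hX, hXr⟩, hmin⟩ := Set.exists_min_image
    {X | G.IsUnionOfComponents U X ∧ r ≤ (S ∩ X).ncard} (fun X => (S ∩ X).ncard) (Set.toFinite _)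
    ⟨U, isUnionOfComponents_self U, hS⟩
  by_cases hX2 : (S ∩ X).ncard < 2 * r
  · exact Or.inl ⟨X, hX, hXr, hX2⟩
  -- Removing from a minimal `X` the component of a terminal `s ∈ X` leaves fewer than `r`
  -- terminals, so that component carries more than `r`.
  obtain ⟨s, hsS, hsX⟩ : (S ∩ X).Nonempty := Set.nonempty_of_ncard_ne_zero (by omega)
  refine Or.inr ⟨s, hX.1 hsX, ?_⟩
  set K := G.componentIn U s
  have hsplit := Set.ncard_inter_add_ncard_sdiff_eq_ncard (S ∩ X) K
  rw [Set.inter_sdiff_assoc] at hsplit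
  have hpos : 0 < (S ∩ X ∩ K).ncard :=
    (Set.ncard_pos (Set.toFinite _)).mpr ⟨s, ⟨hsS, hsX⟩, mem_componentIn_self (hX.1 hsX)⟩
  have hlight : (S ∩ (X \ K)).ncard < r := by
    by_contra! h
    have := hmin (X \ K) ⟨hX.sdiff isUnionOfComponents_componentIn, h⟩
    omega
  have hle : (S ∩ X ∩ K).ncard ≤ (S ∩ K).ncard :=
    Set.ncard_le_ncard (Set.inter_subset_inter_left K Set.inter_subset_left)
  omega

theorem exists_connected_piece {r : ℕ} (hr : 0 < r) (S : Set V) {W : Set V} {ρ : V}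
    (hW : (G.induce W).Connected) (hρ : ρ ∈ W) (hS : r ≤ (S ∩ (W \ {ρ})).ncard) :
    ∃ u ∈ W, ∃ X ⊆ W \ {ρ}, r ≤ (S ∩ X).ncard ∧ (S ∩ X).ncard < 2 * r ∧
      (G.induce (insert u X)).Connected ∧ (G.induce (W \ X)).Connected := by
  induction W using WellFoundedLT.induction generalizing ρ with
  | _ W ih =>
  rcases exists_isUnionOfComponents_or_componentIn hr hS with ⟨X, hX, hXr, hX2⟩ | ⟨s, hs, hsK⟩
  · exact ⟨ρ, hρ, X, hX.1, hXr, hX2, hX.connected_induce_insert hW hρ,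
      hX.connected_induce_sdiff hW hρ⟩
  set K := G.componentIn (W \ {ρ}) s
  have hK : G.IsUnionOfComponents (W \ {ρ}) K := isUnionOfComponents_componentIn
  have hKW : K ⊆ W := hK.1.trans Set.sdiff_subset
  obtain ⟨y, hyK, hρy⟩ := hK.exists_adj hW hρ (mem_componentIn_self hs)
  have hSK : r ≤ (S ∩ (K \ {y})).ncard := by
    have := ncard_inter_le_ncard_inter_sdiff_singleton_add_one S K y
    omega
  obtain ⟨u, hu, X, hX, hXr, hX2, hXu, hKX⟩ :=
    ih K (hKW.ssubset_of_mem_notMem hρ fun h => (hK.1 h).2 rfl)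
      (connected_induce_componentIn hs) hyK hSK
  refine ⟨u, hKW hu, X, hX.trans (Set.sdiff_subset.trans hK.1), hXr, hX2, hXu, ?_⟩
  rw [← Set.sdiff_union_sdiff_cancel hKW (hX.trans Set.sdiff_subset)]
  exact connected_induce_union (hK.connected_induce_sdiff hW hρ).preconnected hKX.preconnected
    ⟨hρ, fun h => (hK.1 h).2 rfl⟩ ⟨hyK, fun h => (hX h).2 rfl⟩ hρy

lemma ncard_inter_le_ncard_inter_add_ncard_sdiff_add_one (S W X : Set V) (u : V) :
    (S ∩ W).ncard ≤ (S ∩ X).ncard + ((S \ {u}) ∩ (W \ X)).ncard + 1 := by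
  have hcover : S ∩ W ⊆ S ∩ X ∪ (S \ {u}) ∩ (W \ X) ∪ {u} := by
    rintro a ⟨haS, haW⟩
    by_cases hau : a = u
    · exact Or.inr hau
    by_cases haX : a ∈ X
    · exact Or.inl (Or.inl ⟨haS, haX⟩)
    · exact Or.inl (Or.inr ⟨⟨haS, hau⟩, haW, haX⟩)
  have := (Set.ncard_le_ncard hcover).trans ((Set.ncard_union_le _ _).trans
    (Nat.add_le_add_right (Set.ncard_union_le _ _) _))
  rwa [Set.ncard_singleton] at this

theorem exists_connected_pieces {r : ℕ} (hr : 0 < r) (k : ℕ) {W S : Set V}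
    (hW : (G.induce W).Connected) (hS : 2 * k * r ≤ (S ∩ W).ncard) :
    ∃ C N : Fin k → Set V, (∀ i, C i ⊆ W) ∧ (∀ i, (G.induce (C i)).Connected) ∧
      (∀ i, N i ⊆ S ∩ C i) ∧ (∀ i, (N i).ncard = r) ∧ Pairwise (Disjoint on N) ∧
      Pairwise fun i j => (C i ∩ C j).Subsingleton := by
  induction k generalizing W S with
  | zero => exact ⟨Fin.elim0, Fin.elim0, Fin.rec0, Fin.rec0, Fin.rec0, Fin.rec0, Fin.rec0, Fin.rec0⟩
  | succ k ih =>
  obtain ⟨ρ, hρ⟩ := hW.nonempty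
  have hSρ : r ≤ (S ∩ (W \ {ρ})).ncard := by
    have := ncard_inter_le_ncard_inter_sdiff_singleton_add_one S W ρ
    nlinarith
  obtain ⟨u, hu, X, hX, hXr, hX2, hXu, hWX⟩ := exists_connected_piece hr S hW hρ hSρ
  obtain ⟨N₀, hN₀, hN₀r⟩ := Set.exists_subset_card_eq hXr
  have hS' : 2 * k * r ≤ ((S \ {u}) ∩ (W \ X)).ncard := by
    have := ncard_inter_le_ncard_inter_add_ncard_sdiff_add_one S W X u
    nlinarith
  obtain ⟨C, N, hCW, hC, hNC, hNr, hNN, hCC⟩ := ih hWX hS'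
  have hN₀N : ∀ i, Disjoint N₀ (N i) := fun i =>
    Set.disjoint_left.mpr fun a ha hai => (hCW i (hNC i hai).2).2 (hN₀ ha).2
  have hXC : ∀ i, (insert u X ∩ C i).Subsingleton := by
    refine fun i => (Set.subsingleton_singleton (a := u)).anti ?_
    rintro a ⟨rfl | haX, hai⟩
    · rfl
    · exact absurd haX (hCW i hai).2
  refine ⟨Fin.cons (insert u X) C, Fin.cons N₀ N, Fin.forall_fin_succ.mpr ⟨?_, ?_⟩,
    Fin.forall_fin_succ.mpr ⟨hXu, hC⟩, Fin.forall_fin_succ.mpr ⟨?_, ?_⟩,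
    Fin.forall_fin_succ.mpr ⟨hN₀r, hNr⟩,
    pairwise_fin_succ_iff.mpr ⟨fun i => (hN₀N i).symm, hN₀N, hNN⟩,
    pairwise_fin_succ_iff.mpr ⟨fun i => Set.inter_comm (insert u X) (C i) ▸ hXC i, hXC, hCC⟩⟩
  · exact Set.insert_subset hu (hX.trans Set.sdiff_subset)
  · exact fun i => (hCW i).trans Set.sdiff_subset
  · exact fun a ha => ⟨(hN₀ ha).1, Or.inr (hN₀ ha).2⟩
  · exact fun i a ha => ⟨(hNC i ha).1.1, (hNC i ha).2⟩

end Finite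

-- When `N ⊆ C`, this is `G[C]` together with the edges from `v` to `N`.
def withApex (G : SimpleGraph V) (C N : Set V) (v : V) : G.Subgraph :=
  (⊤ : G.Subgraph).induce C ⊔ (⊤ : G.Subgraph).induce (insert v N)

section Apex

variable {C C' N N' : Set V} {v : V}

lemma withApex_adj {a b : V} : (G.withApex C N v).Adj a b ↔
    G.Adj a b ∧ (a ∈ C ∧ b ∈ C ∨ a ∈ insert v N ∧ b ∈ insert v N) := by
  simp only [withApex, Subgraph.sup_adj, Subgraph.induce_adj, Subgraph.top_adj]
  tauto

theorem disjoint_edgeSet_withApex (hv : v ∉ C) (hv' : v ∉ C') (hN : N ⊆ C) (hN' : N' ⊆ C')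
    (hCC' : (C ∩ C').Subsingleton) (hNN' : Disjoint N N') :
    Disjoint (G.withApex C N v).edgeSet (G.withApex C' N' v).edgeSet := by
  rw [Set.disjoint_left]
  rintro ⟨a, b⟩ h h'
  rw [Subgraph.mem_edgeSet, withApex_adj] at h h'
  have hab : a ≠ b := h.1.ne
  have hCC'' : ∀ x ∈ C, x ∈ C' → ∀ y ∈ C, y ∈ C' → x = y :=
    fun x hx hx' y hy hy' => hCC' ⟨hx, hx'⟩ ⟨hy, hy'⟩
  grind

end Apex

end SimpleGraph

theorem isThetaModel_withApex {V : Type} {G : SimpleGraph V} {C N : Set V} {v : V}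
    (hC : (G.induce C).Connected) (hv : v ∉ C) (hNC : N ⊆ C)
    (hN : N ⊆ G.neighborSet v) : IsThetaModel N.ncard G (G.withApex C N v) := by
  refine ⟨{v}, C, ?_, Set.disjoint_singleton_left.mpr hv, ?_, ?_, ?_⟩
  · ext a
    simp only [withApex, Subgraph.verts_sup, Subgraph.induce_verts, Set.mem_union,
      Set.mem_singleton_iff, Set.mem_insert_iff]
    have := @hNC a
    tauto
  · exact (Subgraph.singletonSubgraph_connected (G := G) (v := v)).mono
      ((singletonSubgraph_le_iff _ _).mpr rfl) rfl
  · refine Subgraph.Connected.mono (H := (⊤ : G.Subgraph).induce C) ⟨subset_rfl, ?_⟩ rfl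
      (connected_induce_iff.mp hC)
    exact fun a b h => ⟨h.1, h.2.1, Or.inl h⟩
  · have hcross : {e ∈ (G.withApex C N v).edgeSet | ∃ a ∈ ({v} : Set V), ∃ b ∈ C, e = s(a, b)} =
        (fun b => s(v, b)) '' N := by
      ext e
      constructor
      · rintro ⟨he, a, rfl, b, hb, rfl⟩
        rw [Subgraph.mem_edgeSet, withApex_adj] at he
        refine ⟨b, ?_, rfl⟩
        rcases he.2 with ⟨ha, -⟩ | ⟨-, rfl | hbN⟩
        · exact absurd ha hv
        · exact absurd hb hv
        · exact hbN
      · rintro ⟨b, hb, rfl⟩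
        refine ⟨?_, v, rfl, b, hNC hb, rfl⟩
        exact withApex_adj.mpr ⟨hN hb, Or.inr ⟨Set.mem_insert _ _, Or.inr hb⟩⟩
    rw [hcross, Set.ncard_image_of_injective _ fun _ _ => Sym2.congr_right.mp]

theorem stmt1_general {V : Type} [Fintype V] (G : SimpleGraph V) [DecidableRel G.Adj]
    (k r : ℕ) (hr : 0 < r)
    (hG : Biconnected G) (hdeg : ∃ v, 2 * k * r ≤ G.degree v) :
    HasEdgePacking r G k := by
  obtain ⟨v, hv⟩ := hdeg
  have hW : (G.induce {v}ᶜ).Connected := by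
    rw [connected_induce_iff, Subgraph.connected_iff', Set.compl_eq_univ_sdiff]
    exact hG.2.2 v
  have hS : 2 * k * r ≤ (G.neighborSet v ∩ {v}ᶜ).ncard := by
    have hvS : G.neighborSet v ⊆ {v}ᶜ := fun w hw => (G.ne_of_adj hw).symm
    rwa [Set.inter_eq_left.mpr hvS, ← coe_neighborFinset,
      Set.ncard_coe_finset, card_neighborFinset_eq_degree]
  obtain ⟨C, N, hCv, hC, hNC, hNr, hNN, hCC⟩ := exists_connected_pieces hr k hW hS
  have hvC : ∀ i, v ∉ C i := fun i h => hCv i h rfl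
  refine ⟨fun i => G.withApex (C i) (N i) v, fun i => ?_, fun i j hij => ?_⟩
  · exact hNr i ▸ isThetaModel_withApex (hC i) (hvC i) (fun a ha => (hNC i ha).2)
      fun a ha => (hNC i ha).1
  · exact disjoint_edgeSet_withApex (hvC i) (hvC j) (fun a ha => (hNC i ha).2)
      (fun a ha => (hNC j ha).2) (hCC hij) (hNN hij)

/-- Every 2-connected graph with maximum degree at least 2kr contains
k pairwise edge-disjoint models of θ_r. -/
theorem stmt1 {V : Type} [Fintype V] [DecidableEq V] (G : SimpleGraph V) [DecidableRel G.Adj]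
    (k r : ℕ) (hk : 0 < k) (hr : 0 < r)
    (hG : Biconnected G) (hdeg : ∃ v, 2 * k * r ≤ G.degree v) :
    HasEdgePacking r G k :=
  stmt1_general G k r hr hG hdeg
end

section
/- Let T be a tree with a set M of marked vertices, and let k, r be positive integers. If |M| ≥ 2kr, then T contains k pairwise edge-disjoint subtrees T₁, …, T_k such that each T_i contains at least r marked vertices. -/
/-!
Root the tree at `ρ` and let `v` be a deepest vertex whose subtree contains at least `r` marked
vertices. Every child subtree of `v` then contains fewer than `r` of them, so adding child
subtrees to `{v}` one at a time reaches between `r` and `2r` marked vertices. This piece meets the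
rest of the tree only in `v`, the rest is still a tree, and it keeps at least `|M| - 2r` marked
vertices; induct on `k`. Subtrees are described through distances from `ρ`, so the argument
works verbatim in any finite connected graph.
-/

theorem Finset.exists_subset_le_and_le_add {α : Type*} [DecidableEq α] (f : Finset α → ℕ)
    {t δ : ℕ} {C : Finset α} (h₀ : f ∅ ≤ t + δ)
    (hstep : ∀ c ∈ C, ∀ s, f (insert c s) ≤ f s + δ) (hC : t ≤ f C) :
    ∃ s ⊆ C, t ≤ f s ∧ f s ≤ t + δ := by
  induction C using Finset.induction_on with
  | empty => exact ⟨∅, subset_rfl, hC, h₀⟩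
  | insert c C _ ih =>
    by_cases ht : t ≤ f C
    · obtain ⟨s, hs, h⟩ := ih (fun c' hc' => hstep c' (Finset.mem_insert_of_mem hc')) ht
      exact ⟨s, hs.trans (Finset.subset_insert _ _), h⟩
    · have := hstep c (Finset.mem_insert_self _ _) C
      exact ⟨insert c C, subset_rfl, hC, by omega⟩

namespace SimpleGraph

variable {V : Type*} {G : SimpleGraph V}

theorem connected_induce_of_exists_adj_lt {s : Set V} {ρ : V} (φ : V → ℕ) (hρ : ρ ∈ s)
    (h : ∀ w ∈ s, w ≠ ρ → ∃ u ∈ s, G.Adj u w ∧ φ u < φ w) : (G.induce s).Connected := by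
  refine (connected_iff_exists_forall_reachable _).2 ⟨⟨ρ, hρ⟩, ?_⟩
  rintro ⟨w, hw⟩
  induction hφ : φ w using Nat.strong_induction_on generalizing w with
  | _ n ih =>
    obtain rfl | hne := eq_or_ne w ρ
    · rfl
    obtain ⟨u, hu, huw, hlt⟩ := h w hw hne
    exact (ih _ (hφ ▸ hlt) u hu rfl).trans
      (Adj.reachable (show (G.induce s).Adj ⟨u, hu⟩ ⟨w, hw⟩ from huw))

theorem Subgraph.disjoint_edgeSet_induce {H H' : G.Subgraph} {s t : Set V}
    (hst : (s ∩ t).Subsingleton) : Disjoint (H.induce s).edgeSet (H'.induce t).edgeSet := by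
  refine Set.disjoint_left.2 fun e he he' => ?_
  induction e using Sym2.ind with
  | _ a b =>
    rw [Subgraph.mem_edgeSet, Subgraph.induce_adj] at he he'
    exact he.2.2.ne (hst ⟨he.1, he'.1⟩ ⟨he.2.1, he'.2.1⟩)

theorem Reachable.exists_adj_dist_eq_add_one {ρ w : V} (h : G.Reachable ρ w) (hne : w ≠ ρ) :
    ∃ u, G.Adj u w ∧ G.dist ρ w = G.dist ρ u + 1 := by
  obtain ⟨p, hp⟩ := h.symm.exists_walk_length_eq_dist
  cases p with
  | nil => exact absurd rfl hne
  | @cons _ u _ hwu q =>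
    have hq : G.dist ρ u ≤ q.length := dist_comm (G := G) ▸ dist_le q
    have hw : G.dist ρ w ≤ G.dist ρ u + 1 :=
      dist_eq_one_iff_adj.2 hwu.symm ▸ hwu.symm.reachable.dist_triangle_right ρ
    rw [Walk.length_cons, dist_comm] at hp
    exact ⟨u, hwu.symm, by omega⟩

/-- For a tree rooted at `ρ`, the vertex set of the subtree hanging from `u`: the vertices `w`
such that `u` lies on a shortest path from `ρ` to `w`. -/
def descendants (G : SimpleGraph V) (ρ u : V) : Set V :=
  {w | G.dist ρ w = G.dist ρ u + G.dist u w}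

theorem mem_descendants {ρ u w : V} :
    w ∈ G.descendants ρ u ↔ G.dist ρ w = G.dist ρ u + G.dist u w :=
  Iff.rfl

@[simp]
theorem descendants_self (ρ : V) : G.descendants ρ ρ = Set.univ := by
  ext; simp [descendants]

theorem root_notMem_descendants {ρ c : V} (hc : 0 < G.dist ρ c) : ρ ∉ G.descendants ρ c := by
  simp only [mem_descendants, dist_self]
  omega

theorem Connected.exists_child_mem_descendants (hG : G.Connected) {ρ v w : V}
    (hw : w ∈ G.descendants ρ v) (hne : w ≠ v) :
    ∃ c, G.Adj v c ∧ G.dist ρ c = G.dist ρ v + 1 ∧ w ∈ G.descendants ρ c := by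
  obtain ⟨c, hcv, hd⟩ := (hG w v).exists_adj_dist_eq_add_one hne.symm
  have hwc : G.dist ρ w ≤ G.dist ρ c + G.dist c w := hG.dist_triangle
  have hvc : G.dist ρ c ≤ G.dist ρ v + G.dist v c := hG.dist_triangle
  rw [dist_eq_one_iff_adj.2 hcv.symm] at hvc
  rw [dist_comm (u := w), dist_comm (u := w)] at hd
  simp only [mem_descendants] at hw ⊢
  exact ⟨c, hcv.symm, by omega, by omega⟩

theorem Connected.exists_adj_mem_descendants (hG : G.Connected) {ρ c w : V}
    (hw : w ∈ G.descendants ρ c) (hne : w ≠ c) :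
    ∃ u ∈ G.descendants ρ c, G.Adj u w ∧ G.dist ρ u < G.dist ρ w := by
  obtain ⟨u, huw, hd⟩ := (hG c w).exists_adj_dist_eq_add_one hne
  have hu : G.dist ρ u ≤ G.dist ρ c + G.dist c u := hG.dist_triangle
  have hw' : G.dist ρ w ≤ G.dist ρ u + G.dist u w := hG.dist_triangle
  rw [dist_eq_one_iff_adj.2 huw] at hw'
  simp only [mem_descendants] at hw ⊢
  exact ⟨u, by omega, huw, by omega⟩

theorem Connected.mem_descendants_of_adj (hG : G.Connected) {ρ c u w : V} (huw : G.Adj u w)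
    (hd : G.dist ρ w = G.dist ρ u + 1) (hu : u ∈ G.descendants ρ c) :
    w ∈ G.descendants ρ c := by
  have hcw : G.dist c w ≤ G.dist c u + G.dist u w := hG.dist_triangle
  have hw : G.dist ρ w ≤ G.dist ρ c + G.dist c w := hG.dist_triangle
  rw [dist_eq_one_iff_adj.2 huw] at hcw
  simp only [mem_descendants] at hu ⊢
  omega

theorem Connected.connected_induce_insert_biUnion_descendants (hG : G.Connected) {ρ v : V}
    {C : Set V} (hC : ∀ c ∈ C, G.Adj v c ∧ G.dist ρ c = G.dist ρ v + 1) :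
    (G.induce (insert v (⋃ c ∈ C, G.descendants ρ c))).Connected := by
  refine connected_induce_of_exists_adj_lt (G.dist ρ) (Set.mem_insert _ _) ?_
  rintro w (rfl | hw) hne
  · exact absurd rfl hne
  obtain ⟨c, hc, hwc⟩ := Set.mem_iUnion₂.1 hw
  obtain ⟨hvc, hdc⟩ := hC c hc
  obtain rfl | hne' := eq_or_ne w c
  · exact ⟨v, Set.mem_insert _ _, hvc, by omega⟩
  obtain ⟨u, hu, huw, hlt⟩ := hG.exists_adj_mem_descendants hwc hne'
  exact ⟨u, Set.mem_insert_of_mem _ (Set.mem_biUnion hc hu), huw, hlt⟩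

theorem Connected.connected_induce_compl_biUnion_descendants (hG : G.Connected) {ρ : V}
    {C : Set V} (hC : ∀ c ∈ C, 0 < G.dist ρ c) :
    (G.induce (⋃ c ∈ C, G.descendants ρ c)ᶜ).Connected := by
  refine connected_induce_of_exists_adj_lt (G.dist ρ) (ρ := ρ) ?_ fun w hw hne => ?_
  · simp only [Set.mem_compl_iff, Set.mem_iUnion₂, not_exists]
    exact fun c hc => root_notMem_descendants (hC c hc)
  obtain ⟨u, huw, hd⟩ := (hG ρ w).exists_adj_dist_eq_add_one hne
  refine ⟨u, fun hu => hw ?_, huw, by omega⟩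
  obtain ⟨c, hc, huc⟩ := Set.mem_iUnion₂.1 hu
  exact Set.mem_biUnion hc (hG.mem_descendants_of_adj huw hd huc)

theorem exists_le_ncard_inter_descendants [Finite V] {M : Set V} {r : ℕ} (hrM : r ≤ M.ncard)
    (ρ : V) : ∃ v, r ≤ (M ∩ G.descendants ρ v).ncard ∧
      ∀ c, G.dist ρ v < G.dist ρ c → (M ∩ G.descendants ρ c).ncard < r := by
  classical
  have := Fintype.ofFinite V
  obtain ⟨v, hv, hmax⟩ := Finset.exists_max_image {u | r ≤ (M ∩ G.descendants ρ u).ncard}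
    (G.dist ρ) ⟨ρ, by simpa using hrM⟩
  refine ⟨v, by simpa using hv, fun c hc => ?_⟩
  by_contra! h
  have := hmax c (by simpa using h)
  omega

theorem Connected.exists_induce_split [Finite V] (hG : G.Connected) {M : Set V} {r : ℕ}
    (hr : 0 < r) (hrM : r ≤ M.ncard) :
    ∃ S R : Set V, (G.induce S).Connected ∧ (G.induce R).Connected ∧ (S ∩ R).Subsingleton ∧
      M ⊆ S ∪ R ∧ r ≤ (M ∩ S).ncard ∧ (M ∩ S).ncard ≤ 2 * r := by
  classical
  have := Fintype.ofFinite V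
  obtain ⟨ρ⟩ := hG.nonempty
  obtain ⟨v, hv, hsmall⟩ := exists_le_ncard_inter_descendants (G := G) hrM ρ
  let C : Finset V := {c | G.Adj v c ∧ G.dist ρ c = G.dist ρ v + 1}
  let U (s : Finset V) : Set V := ⋃ c ∈ (s : Set V), G.descendants ρ c
  have hstep : ∀ c ∈ C, ∀ s, (M ∩ insert v (U (insert c s))).ncard ≤
      (M ∩ insert v (U s)).ncard + r := by
    intro c hc s
    have hsub : M ∩ insert v (U (insert c s)) ⊆
        (M ∩ insert v (U s)) ∪ (M ∩ G.descendants ρ c) := by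
      simp only [U, Finset.coe_insert, Set.biUnion_insert]
      grind
    have := hsmall c (by simp only [C, Finset.mem_filter] at hc; omega)
    grw [Set.ncard_le_ncard hsub, Set.ncard_union_le]
    omega
  have h₀ : (M ∩ insert v (U ∅)).ncard ≤ r + r := by
    have : (M ∩ insert v (U ∅)).ncard ≤ 1 := by
      grw [Set.ncard_le_ncard (Set.inter_subset_right), ← Set.ncard_singleton v]
      simp [U]
    omega
  have hC : r ≤ (M ∩ insert v (U C)).ncard := by
    refine hv.trans (Set.ncard_le_ncard (Set.inter_subset_inter_right M fun w hw => ?_))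
    obtain rfl | hne := eq_or_ne w v
    · exact Set.mem_insert _ _
    obtain ⟨c, hvc, hdc, hwc⟩ := hG.exists_child_mem_descendants hw hne
    exact Set.mem_insert_of_mem _ (Set.mem_biUnion (by simp [C, hvc, hdc]) hwc)
  obtain ⟨s, hsC, hrs, hs2r⟩ :=
    Finset.exists_subset_le_and_le_add (fun s => (M ∩ insert v (U s)).ncard) h₀ hstep hC
  have hs : ∀ c ∈ (s : Set V), G.Adj v c ∧ G.dist ρ c = G.dist ρ v + 1 := fun c hc => by
    simpa [C] using hsC hc
  refine ⟨insert v (U s), (U s)ᶜ, hG.connected_induce_insert_biUnion_descendants hs,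
    hG.connected_induce_compl_biUnion_descendants fun c hc =>
      (hs c hc).2 ▸ Nat.succ_pos _, ?_, ?_, hrs, hs2r.trans_eq (two_mul r).symm⟩
  · refine (Set.subsingleton_singleton (a := v)).anti ?_
    rintro w ⟨rfl | hw, hw'⟩
    exacts [rfl, absurd hw hw']
  · intro m _
    by_cases hm : m ∈ U s
    exacts [Or.inl (Set.mem_insert_of_mem _ hm), Or.inr hm]

theorem Subgraph.Connected.exists_split [Finite V] {H : G.Subgraph} (hH : H.Connected)
    {M : Set V} (hMH : M ⊆ H.verts) {r : ℕ} (hr : 0 < r) (hrM : r ≤ M.ncard) :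
    ∃ A B : G.Subgraph, A ≤ H ∧ B ≤ H ∧ A.Connected ∧ B.Connected ∧
      Disjoint A.edgeSet B.edgeSet ∧ M ⊆ A.verts ∪ B.verts ∧
      r ≤ (M ∩ A.verts).ncard ∧ (M ∩ A.verts).ncard ≤ 2 * r := by
  have hM : (Subtype.val ⁻¹' M : Set H.verts).ncard = M.ncard :=
    Set.ncard_preimage_of_injective_subset_range Subtype.val_injective (by simpa using hMH)
  obtain ⟨S, R, hS, hR, hSR, hMSR, hrS, hS2r⟩ :=
    (Subgraph.connected_iff'.1 hH).exists_induce_split hr (hrM.trans_eq hM.symm)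
  have hcard : (M ∩ Subtype.val '' S).ncard = (Subtype.val ⁻¹' M ∩ S).ncard := by
    rw [Set.inter_comm, ← Set.image_inter_preimage, Set.inter_comm,
      Set.ncard_image_of_injective _ Subtype.val_injective]
  refine ⟨Subgraph.coeSubgraph ((⊤ : H.coe.Subgraph).induce S),
    Subgraph.coeSubgraph ((⊤ : H.coe.Subgraph).induce R), Subgraph.coeSubgraph_le _,
    Subgraph.coeSubgraph_le _, (connected_induce_iff.1 hS).coeSubgraph _,
    (connected_induce_iff.1 hR).coeSubgraph _, ?_, ?_, ?_⟩
  · simp only [Subgraph.edgeSet_map]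
    exact (Set.disjoint_image_iff (Sym2.map.injective Subtype.val_injective)).2
      (Subgraph.disjoint_edgeSet_induce hSR)
  · intro m hm
    rcases hMSR (show ⟨m, hMH hm⟩ ∈ Subtype.val ⁻¹' M from hm) with h | h
    exacts [Or.inl ⟨_, h, rfl⟩, Or.inr ⟨_, h, rfl⟩]
  · simp only [Subgraph.verts_coeSubgraph, Subgraph.induce_verts, hcard]
    exact ⟨hrS, hS2r⟩

structure IsMarkedPacking {ι : Type*} (M : Set V) (r : ℕ) (T : ι → G.Subgraph)
    (Ms : ι → Set V) : Prop where
  connected : ∀ i, (T i).Connected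
  pairwise_disjoint_edgeSet : Pairwise fun i j => Disjoint (T i).edgeSet (T j).edgeSet
  subset : ∀ i, Ms i ⊆ M
  subset_verts : ∀ i, Ms i ⊆ (T i).verts
  pairwise_disjoint : Pairwise fun i j => Disjoint (Ms i) (Ms j)
  le_ncard : ∀ i, r ≤ (Ms i).ncard

theorem IsMarkedPacking.cons {k r : ℕ} {M Ma : Set V} {A : G.Subgraph}
    {T : Fin k → G.Subgraph} {Ms : Fin k → Set V} (h : IsMarkedPacking (M \ Ma) r T Ms)
    (hA : A.Connected) (hAT : ∀ i, Disjoint A.edgeSet (T i).edgeSet) (hMa : Ma ⊆ M)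
    (hMaA : Ma ⊆ A.verts) (hr : r ≤ Ma.ncard) :
    IsMarkedPacking M r (Fin.cons A T : Fin (k + 1) → G.Subgraph)
      (Fin.cons Ma Ms : Fin (k + 1) → Set V) where
  connected := Fin.cases hA h.connected
  pairwise_disjoint_edgeSet := pairwise_fin_succ_iff.2
    ⟨fun i => (hAT i).symm, hAT, fun _ _ hij => h.pairwise_disjoint_edgeSet hij⟩
  subset := Fin.cases hMa fun i => (h.subset i).trans Set.sdiff_subset
  subset_verts := Fin.cases hMaA h.subset_verts
  pairwise_disjoint := by
    have hMaMs (i : Fin k) : Disjoint Ma (Ms i) :=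
      Set.disjoint_of_subset_right (h.subset i) Set.disjoint_sdiff_right
    exact pairwise_fin_succ_iff.2
      ⟨fun i => (hMaMs i).symm, hMaMs, fun _ _ hij => h.pairwise_disjoint hij⟩
  le_ncard := Fin.cases hr h.le_ncard

theorem Subgraph.Connected.exists_isMarkedPacking [Finite V] {r : ℕ} (hr : 0 < r) (k : ℕ)
    {H : G.Subgraph} (hH : H.Connected) {M : Set V} (hMH : M ⊆ H.verts)
    (hM : 2 * k * r ≤ M.ncard) :
    ∃ (T : Fin k → G.Subgraph) (Ms : Fin k → Set V),
      (∀ i, T i ≤ H) ∧ IsMarkedPacking M r T Ms := by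
  induction k generalizing H M with
  | zero =>
    exact ⟨isEmptyElim, isEmptyElim, isEmptyElim, ⟨isEmptyElim, fun i => isEmptyElim i,
      isEmptyElim, isEmptyElim, fun i => isEmptyElim i, isEmptyElim⟩⟩
  | succ k ih =>
    obtain ⟨A, B, hAH, hBH, hA, hB, hAB, hMAB, hrA, hA2r⟩ :=
      hH.exists_split hMH hr (by nlinarith)
    have hMB : M \ (M ∩ A.verts) ⊆ B.verts := fun m ⟨hm, hmA⟩ =>
      (hMAB hm).resolve_left fun h => hmA ⟨hm, h⟩
    have hcard : 2 * k * r ≤ (M \ (M ∩ A.verts)).ncard := by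
      rw [Set.ncard_sdiff Set.inter_subset_left]
      have : 2 * (k + 1) * r = 2 * k * r + 2 * r := by ring
      omega
    obtain ⟨T, Ms, hTB, hT⟩ := ih hB hMB hcard
    exact ⟨Fin.cons A T, Fin.cons (M ∩ A.verts) Ms, Fin.cases hAH fun i => (hTB i).trans hBH,
      hT.cons hA (fun i => hAB.mono_right (Subgraph.edgeSet_mono (hTB i)))
        Set.inter_subset_left Set.inter_subset_right hrA⟩

end SimpleGraph

open SimpleGraph

theorem stmt3_general {V : Type} [Fintype V] (T : SimpleGraph V) (hT : T.IsTree)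
    (M : Finset V) (k r : ℕ) (hr : 0 < r) (hM : 2 * k * r ≤ M.card) :
    ∃ T' : Fin k → T.Subgraph, ∃ Ms : Fin k → Finset V,
      (∀ i, (T' i).Connected) ∧
      (∀ i j, i ≠ j → Disjoint (T' i).edgeSet (T' j).edgeSet) ∧
      (∀ i, Ms i ⊆ M) ∧ (∀ i, ∀ v ∈ Ms i, v ∈ (T' i).verts) ∧
      (∀ i j, i ≠ j → Disjoint (Ms i : Set V) (Ms j)) ∧
      (∀ i, r ≤ (Ms i).card) := by
  have hTop : (⊤ : T.Subgraph).Connected :=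
    Subgraph.connected_iff'.2 (Subgraph.topIso.connected_iff.2 hT.connected)
  obtain ⟨T', Ms, -, hP⟩ := hTop.exists_isMarkedPacking hr k (Set.subset_univ (M : Set V))
    (by rwa [Set.ncard_coe_finset])
  refine ⟨T', fun i => (Ms i).toFinite.toFinset, hP.connected,
    fun i j hij => hP.pairwise_disjoint_edgeSet hij, fun i => ?_,
    fun i v hv => hP.subset_verts i (by simpa using hv),
    fun i j hij => by simpa using hP.pairwise_disjoint hij,
    fun i => by rw [← Set.ncard_eq_toFinset_card]; exact hP.le_ncard i⟩
  simpa [← Finset.coe_subset] using hP.subset i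

/-- If a tree T has a set M of at least 2kr marked vertices, then T contains k pairwise
edge-disjoint subtrees each containing at least r marked vertices (with each marked
vertex counted for at most one subtree, via the disjoint sets Ms i). -/
theorem stmt3 {V : Type} [Fintype V] [DecidableEq V] (T : SimpleGraph V) (hT : T.IsTree)
    (M : Finset V) (k r : ℕ) (hk : 0 < k) (hr : 0 < r) (hM : 2 * k * r ≤ M.card) :
    ∃ T' : Fin k → T.Subgraph, ∃ Ms : Fin k → Finset V,
      (∀ i, (T' i).Connected) ∧
      (∀ i j, i ≠ j → Disjoint (T' i).edgeSet (T' j).edgeSet) ∧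
      (∀ i, Ms i ⊆ M) ∧ (∀ i, ∀ v ∈ Ms i, v ∈ (T' i).verts) ∧
      (∀ i j, i ≠ j → Disjoint (Ms i : Set V) (Ms j)) ∧
      (∀ i, r ≤ (Ms i).card) :=
  stmt3_general T hT M k r hr hM
end

section
/- For every integer r ≥ 1 and every graph G, if the treewidth of G is at least 2r − 1, then G contains θ_r as a minor. -/
/-!
Take a normal spanning forest of `G`: a rooted spanning forest along edges of `G` in which
every edge of `G` joins a vertex to one of its ancestors. One exists because a rooted spanning
forest maximising the sum of the depths is normal: an edge `uv` with `u`, `v` incomparable and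
`v` not deeper than `u` lets one hang the subtree of `v` below `u`. Giving each vertex `v` the
bag formed by `v` and its strict ancestors with a neighbour in the subtree of `v` yields a tree
decomposition shaped like the forest. If that set of ancestors had `r` elements, the path from
its deepest element to the root and the subtree of `v` would be disjoint connected sets joined
by at least `r` edges, a model of `θ_r`. So every bag has at most `r ≤ 2r - 1` vertices.
-/

open SimpleGraph

/-- A tree decomposition of `G` with index type `ι`. -/
structure TreeDecomp {V : Type} (G : SimpleGraph V) (ι : Type) where
  tree : SimpleGraph ι
  isTree : tree.IsTree
  bag : ι → Set V
  mem_bag : ∀ v, ∃ i, v ∈ bag i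
  edge_bag : ∀ ⦃u v⦄, G.Adj u v → ∃ i, u ∈ bag i ∧ v ∈ bag i
  conn_bag : ∀ v, (tree.induce {i | v ∈ bag i}).Connected

open Relation

lemma exists_isThetaModel_of_le_ncard {V : Type} {G : SimpleGraph V} {r : ℕ} {A B : Set V}
    (hAB : Disjoint A B) (hA : (G.induce A).Connected) (hB : (G.induce B).Connected)
    (hr : r ≤ {e ∈ G.edgeSet | ∃ a ∈ A, ∃ b ∈ B, e = s(a, b)}.ncard) :
    ∃ H : G.Subgraph, IsThetaModel r G H := by
  obtain ⟨S, hS, rfl⟩ := Set.exists_subset_card_eq hr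
  let H : G.Subgraph :=
    { verts := A ∪ B
      Adj x y := G.Adj x y ∧ (x ∈ A ∧ y ∈ A ∨ x ∈ B ∧ y ∈ B ∨ s(x, y) ∈ S)
      adj_sub h := h.1
      edge_vert := by
        rintro x y ⟨-, ⟨hx, -⟩ | ⟨hx, -⟩ | hxy⟩
        · exact Or.inl hx
        · exact Or.inr hx
        · obtain ⟨-, a, ha, b, hb, he⟩ := hS hxy
          rcases Sym2.eq_iff.1 he with ⟨rfl, -⟩ | ⟨rfl, -⟩
          exacts [Or.inl ha, Or.inr hb]
      symm := ⟨by
        rintro x y ⟨hxy, h⟩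
        rw [Sym2.eq_swap] at h
        exact ⟨hxy.symm, by tauto⟩⟩ }
  have hcross : {e ∈ H.edgeSet | ∃ a ∈ A, ∃ b ∈ B, e = s(a, b)} = S := by
    ext e
    constructor
    · rintro ⟨hH, a, ha, b, hb, rfl⟩
      rcases hH.2 with ⟨-, hb'⟩ | ⟨ha', -⟩ | he
      exacts [(hAB.ne_of_mem hb' hb rfl).elim, (hAB.ne_of_mem ha ha' rfl).elim, he]
    · intro he
      obtain ⟨hG, a, ha, b, hb, rfl⟩ := hS he
      exact ⟨⟨hG, Or.inr (Or.inr he)⟩, a, ha, b, hb, rfl⟩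
  refine ⟨H, A, B, rfl, hAB, ?_, ?_, hcross ▸ rfl⟩
  · refine (connected_induce_iff.1 hA).mono' (H := (⊤ : G.Subgraph).induce A) ?_ rfl
    exact fun x y ⟨hx, hy, hxy⟩ => ⟨hx, hy, hxy, Or.inl ⟨hx, hy⟩⟩
  · refine (connected_induce_iff.1 hB).mono' (H := (⊤ : G.Subgraph).induce B) ?_ rfl
    exact fun x y ⟨hx, hy, hxy⟩ => ⟨hx, hy, hxy, Or.inr (Or.inl ⟨hx, hy⟩)⟩

namespace SimpleGraph

variable {V : Type*}

/-- The forest of the parent map `p`, with `none` as a common root for the `a` with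
`p a = none`. -/
def parentGraph {α : Type*} (p : α → Option α) : SimpleGraph (Option α) :=
  fromEdgeSet (Set.range fun a => s(some a, p a))

lemma parentGraph_adj_parent {α : Type*} {p : α → Option α} {a : α} (h : p a ≠ some a) :
    (parentGraph p).Adj (some a) (p a) :=
  (fromEdgeSet_adj _).2 ⟨⟨a, rfl⟩, Ne.symm h⟩

lemma isTree_parentGraph {α : Type*} [Finite α] {p : α → Option α} (rank : α → ℕ)
    (hp : ∀ ⦃a b⦄, p a = some b → rank b < rank a) : (parentGraph p).IsTree := by
  have hne : ∀ a, p a ≠ some a := fun a h => (hp h).false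
  have hreach : ∀ a, (parentGraph p).Reachable (some a) none := by
    intro a
    induction a using (measure rank).wf.induction with
    | _ a ih =>
      have hadj := parentGraph_adj_parent (hne a)
      cases hpa : p a with
      | none => exact (hpa ▸ hadj).reachable
      | some b => exact (hpa ▸ hadj).reachable.trans (ih b (hp hpa))
  have hinj : Function.Injective fun a => s(some a, p a) := by
    intro a b hab
    rcases Sym2.eq_iff.1 hab with ⟨h, -⟩ | ⟨hab, hba⟩
    · exact Option.some_inj.1 h
    · exact ((hp hab.symm).trans (hp hba)).false.elim
  have hedges : (parentGraph p).edgeSet = Set.range fun a => s(some a, p a) := by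
    rw [parentGraph, edgeSet_fromEdgeSet, sdiff_eq_left, Set.disjoint_left]
    rintro _ ⟨a, rfl⟩ hdiag
    exact hne a (Sym2.mk_isDiag_iff.1 hdiag).symm
  have := Fintype.ofFinite α
  rw [isTree_iff_connected_and_card, connected_iff_exists_forall_reachable, hedges,
    Nat.card_range_of_injective hinj, Nat.card_eq_fintype_card, Nat.card_eq_fintype_card,
    Fintype.card_option]
  refine ⟨⟨none, ?_⟩, rfl⟩
  rintro (_ | a)
  · rfl
  · exact (hreach a).symm

lemma induce_connected_of_reflTransGen {G : SimpleGraph V} {S : Set V} {s : V} (hs : s ∈ S)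
    (h : ∀ a ∈ S, ReflTransGen (fun x y => G.Adj x y ∧ x ∈ S ∧ y ∈ S) s a) :
    (G.induce S).Connected := by
  have key : ∀ a, ReflTransGen (fun x y => G.Adj x y ∧ x ∈ S ∧ y ∈ S) s a →
      ∀ ha : a ∈ S, (G.induce S).Reachable ⟨s, hs⟩ ⟨a, ha⟩ := by
    intro a hsa
    induction hsa with
    | refl => exact fun _ => Reachable.refl _
    | tail _ hbc ih => exact fun _ => (ih hbc.2.1).trans (Adj.reachable (by simpa using hbc.1))
  rw [connected_iff_exists_forall_reachable]
  exact ⟨⟨s, hs⟩, fun ⟨a, ha⟩ => key a (h a ha) ha⟩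

structure RootedForest (G : SimpleGraph V) where
  parent : V → Option V
  depth : V → ℕ
  adj_of_parent_eq : ∀ ⦃a b⦄, parent a = some b → G.Adj a b
  depth_of_parent_eq : ∀ ⦃a b⦄, parent a = some b → depth a = depth b + 1
  depth_of_parent_eq_none : ∀ ⦃a⦄, parent a = none → depth a = 0

namespace RootedForest

variable {G : SimpleGraph V} (F : RootedForest G)

/-- `F.Le x y`: `y` lies on the path from `x` to its root. -/
def Le (x y : V) : Prop :=
  ReflTransGen (fun a b => F.parent a = some b) x y

def IsNormal : Prop :=
  ∀ ⦃u v⦄, G.Adj u v → F.Le u v ∨ F.Le v u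

protected lemma le_refl (x : V) : F.Le x x :=
  ReflTransGen.refl

lemma parent_ne_self (x : V) : F.parent x ≠ some x := fun h => by
  have := F.depth_of_parent_eq h
  omega

variable {F}

lemma depth_le_of_le {x y : V} (h : F.Le x y) : F.depth y ≤ F.depth x := by
  induction h with
  | refl => rfl
  | tail _ hbc ih => have := F.depth_of_parent_eq hbc; omega

lemma eq_of_le_of_depth_le {x y : V} (h : F.Le x y) (hd : F.depth x ≤ F.depth y) : x = y := by
  rcases h.cases_head with rfl | ⟨c, hxc, hcy⟩
  · rfl
  · have := F.depth_of_parent_eq hxc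
    have := depth_le_of_le hcy
    omega

lemma le_total_of_le {x a b : V} (ha : F.Le x a) (hb : F.Le x b) : F.Le a b ∨ F.Le b a :=
  ReflTransGen.total_of_right_unique (fun _ _ _ h h' => Option.some_inj.1 (h.symm.trans h')) ha hb

lemma le_iff_of_parent_eq {x b v : V} (hx : F.parent x = some b) (hxv : x ≠ v) :
    F.Le x v ↔ F.Le b v := by
  refine ⟨fun h => ?_, ReflTransGen.head hx⟩
  obtain ⟨c, hxc, hcv⟩ := h.cases_head.resolve_left hxv
  rwa [Option.some_inj.1 (hx.symm.trans hxc)]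

lemma exists_depth_eq {x : V} {k : ℕ} (hk : k ≤ F.depth x) : ∃ y, F.depth y = k := by
  obtain ⟨n, hn⟩ : ∃ n, F.depth x = n := ⟨_, rfl⟩
  induction n generalizing x with
  | zero => exact ⟨x, by omega⟩
  | succ n ih =>
    rcases Nat.lt_or_eq_of_le hk with hlt | rfl
    · cases hx : F.parent x with
      | none => simp [F.depth_of_parent_eq_none hx] at hn
      | some b =>
        have := F.depth_of_parent_eq hx
        exact ih (x := b) (by omega) (by omega)
    · exact ⟨x, by omega⟩

lemma depth_lt_card [Fintype V] (x : V) : F.depth x < Fintype.card V := by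
  classical
  have hsub : Finset.range (F.depth x + 1) ⊆ Finset.univ.image F.depth := by
    intro k hk
    obtain ⟨y, hy⟩ := exists_depth_eq (Finset.mem_range_succ_iff.1 hk)
    exact Finset.mem_image.2 ⟨y, Finset.mem_univ y, hy⟩
  have := (Finset.card_le_card hsub).trans Finset.card_image_le
  simpa using this

open Classical in
/-- Hang the subtree of `v` below `u`. -/
noncomputable def rehang {u v : V} (huv : G.Adj v u) (hu : ¬F.Le u v) (hd : F.depth v ≤ F.depth u) :
    RootedForest G where
  parent := Function.update F.parent v (some u)
  depth x := if F.Le x v then F.depth x + (F.depth u + 1 - F.depth v) else F.depth x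
  adj_of_parent_eq a b h := by
    rcases eq_or_ne a v with rfl | hav
    · rw [Function.update_self, Option.some_inj] at h
      exact h ▸ huv
    · rw [Function.update_of_ne hav] at h
      exact F.adj_of_parent_eq h
  depth_of_parent_eq a b h := by
    rcases eq_or_ne a v with rfl | hav
    · rw [Function.update_self, Option.some_inj] at h
      subst h
      rw [if_pos (F.le_refl _), if_neg hu]
      omega
    · rw [Function.update_of_ne hav] at h
      simp only [le_iff_of_parent_eq h hav, F.depth_of_parent_eq h]
      split_ifs <;> omega
  depth_of_parent_eq_none a h := by
    rcases eq_or_ne a v with rfl | hav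
    · simp at h
    · rw [Function.update_of_ne hav] at h
      have hnle : ¬F.Le a v := fun hle => by
        obtain ⟨c, hac, -⟩ := hle.cases_head.resolve_left hav
        simp [h] at hac
      simp [hnle, F.depth_of_parent_eq_none h]

lemma sum_depth_lt_sum_depth_rehang [Fintype V] {u v : V} (huv : G.Adj v u) (hu : ¬F.Le u v)
    (hd : F.depth v ≤ F.depth u) : ∑ x, F.depth x < ∑ x, (F.rehang huv hu hd).depth x := by
  refine Finset.sum_lt_sum (fun x _ => ?_) ⟨v, Finset.mem_univ v, ?_⟩
  · simp only [rehang]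
    split_ifs <;> omega
  · simp only [rehang, if_pos (F.le_refl v)]
    omega

theorem exists_isNormal [Fintype V] (G : SimpleGraph V) : ∃ F : RootedForest G, F.IsNormal := by
  set P := {n | ∃ F : RootedForest G, ∑ x, F.depth x = n}
  have hbdd : BddAbove P := by
    refine ⟨Fintype.card V * Fintype.card V, ?_⟩
    rintro _ ⟨F, rfl⟩
    calc ∑ x, F.depth x ≤ ∑ _x : V, Fintype.card V :=
          Finset.sum_le_sum fun x _ => (depth_lt_card x).le
      _ = Fintype.card V * Fintype.card V := by simp
  have hne : P.Nonempty := ⟨0, ⟨fun _ => none, fun _ => 0, by simp, by simp, by simp⟩, by simp⟩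
  have hmax : ∀ F' : RootedForest G, ∑ x, F'.depth x ≤ sSup P := fun F' => le_csSup hbdd ⟨F', rfl⟩
  obtain ⟨F, hF⟩ := Nat.sSup_mem hne hbdd
  refine ⟨F, fun u v huv => by_contra fun hcmp => ?_⟩
  rw [not_or] at hcmp
  rcases le_total (F.depth u) (F.depth v) with hd | hd
  · exact (sum_depth_lt_sum_depth_rehang huv hcmp.2 hd).not_ge (hF ▸ hmax _)
  · exact (sum_depth_lt_sum_depth_rehang huv.symm hcmp.1 hd).not_ge (hF ▸ hmax _)

variable (F)

def ancestors (x : V) : Set V := {a | F.Le x a}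

def subtree (x : V) : Set V := {a | F.Le a x}

lemma connected_induce_ancestors (x : V) : (G.induce (F.ancestors x)).Connected := by
  refine induce_connected_of_reflTransGen (F.le_refl x) fun a ha => ?_
  induction ha with
  | refl => rfl
  | tail hxb hbc ih => exact ih.tail ⟨F.adj_of_parent_eq hbc, hxb, hxb.tail hbc⟩

lemma connected_induce_subtree (x : V) : (G.induce (F.subtree x)).Connected := by
  refine induce_connected_of_reflTransGen (F.le_refl x) fun a ha => ?_
  induction ha using ReflTransGen.head_induction_on with
  | refl => rfl
  | head hac hcx ih => exact ih.tail ⟨(F.adj_of_parent_eq hac).symm, hcx, hcx.head hac⟩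

/-- The intersection of the bags of `v` and of its parent. -/
def adhesion (v : V) : Set V :=
  {u | F.Le v u ∧ u ≠ v ∧ ∃ x ∈ F.subtree v, G.Adj u x}

def bag : Option V → Set V
  | none => ∅
  | some v => insert v (F.adhesion v)

variable {F}

lemma mem_adhesion_of_adj {u v : V} (h : F.Le u v) (huv : G.Adj u v) : v ∈ F.adhesion u :=
  ⟨h, huv.ne.symm, u, F.le_refl u, huv.symm⟩

lemma mem_bag_of_parent_eq {x p w : V} (hx : F.parent x = some p) (hw : w ∈ F.adhesion x) :
    w ∈ F.bag (some p) := by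
  obtain ⟨hxw, hwx, y, hyx, hwy⟩ := hw
  have hpw : F.Le p w := (le_iff_of_parent_eq hx hwx.symm).1 hxw
  rcases eq_or_ne w p with rfl | hwp
  · exact Set.mem_insert w _
  · exact Or.inr ⟨hpw, hwp, y, hyx.tail hx, hwy⟩

variable (F)

lemma connected_induce_bag (w : V) :
    ((parentGraph F.parent).induce {i | w ∈ F.bag i}).Connected := by
  refine induce_connected_of_reflTransGen (s := some w) (Set.mem_insert w _) ?_
  rintro (_ | x) hx
  · exact hx.elim
  have hxw : F.Le x w := by
    rcases hx with rfl | hx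
    exacts [F.le_refl _, hx.1]
  induction hxw using ReflTransGen.head_induction_on with
  | refl => rfl
  | @head x p hxp _ ih =>
    rcases hx with rfl | hx
    · rfl
    have hp := mem_bag_of_parent_eq hxp hx
    have hadj := parentGraph_adj_parent (F.parent_ne_self x)
    rw [hxp] at hadj
    exact (ih hp).tail ⟨hadj.symm, hp, Or.inr hx⟩

end RootedForest

def RootedForest.treeDecomp {V : Type} [Finite V] {G : SimpleGraph V}
    {F : RootedForest G} (hF : F.IsNormal) : TreeDecomp G (Option V) where
  tree := parentGraph F.parent
  isTree := isTree_parentGraph F.depth fun _ _ h => by simp [F.depth_of_parent_eq h]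
  bag := F.bag
  mem_bag v := ⟨some v, Set.mem_insert v _⟩
  edge_bag u v huv := by
    rcases hF huv with h | h
    · exact ⟨some u, Set.mem_insert u _, Or.inr (RootedForest.mem_adhesion_of_adj h huv)⟩
    · exact ⟨some v, Or.inr (RootedForest.mem_adhesion_of_adj h huv.symm), Set.mem_insert v _⟩
  conn_bag := F.connected_induce_bag

theorem RootedForest.ncard_adhesion_lt {V : Type} [Finite V] {G : SimpleGraph V}
    (F : RootedForest G) {r : ℕ} (hr : 1 ≤ r) (hno : ¬∃ H : G.Subgraph, IsThetaModel r G H)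
    (v : V) : (F.adhesion v).ncard < r := by
  rcases (F.adhesion v).eq_empty_or_nonempty with h | hne
  · rwa [h, Set.ncard_empty]
  -- the adhesion is a chain of ancestors of `v`, so it lies above its deepest element `u₀`
  obtain ⟨u₀, hu₀, hmax⟩ := Set.exists_max_image _ F.depth (Set.toFinite _) hne
  have hsub : F.adhesion v ⊆ F.ancestors u₀ := fun u hu =>
    (le_total_of_le hu.1 hu₀.1).elim (fun h => eq_of_le_of_depth_le h (hmax u hu) ▸ F.le_refl u) id
  have hdisj : Disjoint (F.ancestors u₀) (F.subtree v) := Set.disjoint_left.2 fun a ha hav =>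
    hu₀.2.1 (eq_of_le_of_depth_le hu₀.1 (depth_le_of_le (ha.trans hav))).symm
  choose! nbr hnbr_mem hnbr_adj using fun u (hu : u ∈ F.adhesion v) => hu.2.2
  calc (F.adhesion v).ncard
      ≤ {e ∈ G.edgeSet | ∃ a ∈ F.ancestors u₀, ∃ b ∈ F.subtree v, e = s(a, b)}.ncard := by
        refine Set.ncard_le_ncard_of_injOn (fun u => s(u, nbr u))
          (fun u hu => ⟨hnbr_adj u hu, u, hsub hu, nbr u, hnbr_mem u hu, rfl⟩) ?_ (Set.toFinite _)
        intro u hu u' hu' h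
        rcases Sym2.eq_iff.1 h with ⟨h, -⟩ | ⟨h, -⟩
        exacts [h, (hdisj.ne_of_mem (hsub hu) (hnbr_mem u' hu') h).elim]
    _ < r := lt_of_not_ge fun h => hno <| exists_isThetaModel_of_le_ncard hdisj
        (F.connected_induce_ancestors u₀) (F.connected_induce_subtree v) h

end SimpleGraph

/-- If G has treewidth at least 2r - 1 (every tree decomposition has a bag of
size larger than 2r - 1), then G contains a model of θ_r. -/
theorem stmt5 {V : Type} [Fintype V] (G : SimpleGraph V) (r : ℕ) (hr : 1 ≤ r)
    (htw : ∀ (ι : Type) (D : TreeDecomp G ι), ∃ i, 2 * r - 1 < (D.bag i).ncard) :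
    ∃ H : G.Subgraph, IsThetaModel r G H := by
  by_contra hno
  obtain ⟨F, hF⟩ := RootedForest.exists_isNormal G
  obtain ⟨_ | v, hv⟩ := htw _ (RootedForest.treeDecomp hF)
  · simp [RootedForest.treeDecomp, RootedForest.bag] at hv
  · have := F.ncard_adhesion_lt hr hno v
    have := Set.ncard_insert_le v (F.adhesion v)
    change 2 * r - 1 < (insert v (F.adhesion v)).ncard at hv
    omega
end

section
/- Let (T, V) be a tree decomposition of a graph G rooted at r, and for each node t let H_t = (⋃_{t' descendant of t} V_{t'}) \ V_t. If t is a join node with children t₁ and t₂ (i.e., V_t = V_{t₁} = V_{t₂}), then H_t = H_{t₁} ∪ H_{t₂}, the sets H_{t₁} and H_{t₂} are disjoint, and there is no edge of G between a vertex of H_{t₁} and a vertex of H_{t₂}. -/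
open SimpleGraph

/-- The descendants of `t` in the decomposition tree rooted at `ρ`:
the nodes `u ≠ t` such that the path from the root `ρ` to `u` passes through `t`. -/
def Desc {V ι : Type} {G : SimpleGraph V} (D : TreeDecomp G ι) (ρ t : ι) : Set ι :=
  {u | u ≠ t ∧ ∀ p : D.tree.Walk ρ u, p.IsPath → t ∈ p.support}

/-- H_t : the union of the bags of the (strict) descendants of t, minus the bag of t. -/
def Hset {V ι : Type} {G : SimpleGraph V} (D : TreeDecomp G ι) (ρ t : ι) : Set V :=
  (⋃ u ∈ Desc D ρ t, D.bag u) \ D.bag t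

section Aux
variable {ι : Type} {T : SimpleGraph ι}

private lemma aux_concat_path {u v x : ι} {p : T.Walk u v} (hp : p.IsPath)
    (h : T.Adj v x) (hx : x ∉ p.support) : (p.concat h).IsPath := by
  rw [← Walk.isPath_reverse_iff, Walk.reverse_concat, Walk.cons_isPath_iff]
  exact ⟨(Walk.isPath_reverse_iff p).mpr hp, by simpa [Walk.support_reverse] using hx⟩

private lemma aux_getVert_concat {u v x : ι} (p : T.Walk u v) (h : T.Adj v x)
    (hl : u ≠ v) : (p.concat h).getVert 1 = p.getVert 1 := by
  have h0 : p.length ≠ 0 := fun h0 => hl (Walk.eq_of_length_eq_zero h0)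
  rw [Walk.concat_eq_append, Walk.getVert_append]
  by_cases h1 : 1 < p.length
  · simp [h1]
  · have hp1 : p.length = 1 := by omega
    rw [if_neg h1, hp1]
    simp [Walk.getVert_zero, ← hp1, Walk.getVert_length]

private lemma aux_getVert_takeUntil [DecidableEq ι] {v w x : ι} (p : T.Walk v w)
    (hx : x ∈ p.support) (hxv : x ≠ v) :
    (p.takeUntil x hx).getVert 1 = p.getVert 1 := by
  cases p with
  | nil =>
    rw [Walk.mem_support_nil_iff] at hx
    exact absurd hx hxv
  | cons h q =>
    rw [Walk.takeUntil]
    rw [dif_neg (fun he => hxv he.symm)]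
    simp [Walk.getVert_cons_succ, Walk.getVert_zero]

private lemma aux_mutual [DecidableEq ι] (hu : ∀ v w : ι, ∃! p : T.Walk v w, p.IsPath)
    {r a b : ι} {p : T.Walk r a} {q : T.Walk r b} (hp : p.IsPath) (hq : q.IsPath)
    (hab : a ∈ q.support) (hba : b ∈ p.support) : a = b := by
  by_contra hne
  have h1 : q.takeUntil a hab = p := (hu r a).unique (hq.takeUntil hab) hp
  have hb' : b ∈ (q.takeUntil a hab).support := by rw [h1]; exact hba
  have h2 : (q.takeUntil a hab).takeUntil b hb' = q :=
    (hu r b).unique ((hq.takeUntil hab).takeUntil hb') hq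
  have hlt : (q.takeUntil a hab).length < q.length := by
    have hspec := congrArg Walk.length (q.take_spec hab)
    rw [Walk.length_append] at hspec
    have hd : (q.dropUntil a hab).length ≠ 0 := fun h0 => hne (Walk.eq_of_length_eq_zero h0)
    omega
  have hle := Walk.length_takeUntil_le (q.takeUntil a hab) hb'
  rw [h2] at hle
  omega

private lemma aux_step [DecidableEq ι] {t u x s : ι} (p : T.Walk t u) (hp : p.IsPath)
    (h1 : p.getVert 1 = s) (hut : u ≠ t) (hadj : T.Adj u x) (hxt : x ≠ t) :
    ∃ q : T.Walk t x, q.IsPath ∧ q.getVert 1 = s := by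
  by_cases hx : x ∈ p.support
  · exact ⟨p.takeUntil x hx, hp.takeUntil hx, by rw [aux_getVert_takeUntil p hx hxt, h1]⟩
  · exact ⟨p.concat hadj, aux_concat_path hp hadj hx,
      by rw [aux_getVert_concat p hadj (Ne.symm hut), h1]⟩

private lemma aux_walk_side [DecidableEq ι] {t s : ι} :
    ∀ {u u' : ι} (w : T.Walk u u'), t ∉ w.support →
      (∃ p : T.Walk t u, p.IsPath ∧ p.getVert 1 = s ∧ u ≠ t) →
      ∃ q : T.Walk t u', q.IsPath ∧ q.getVert 1 = s ∧ u' ≠ t := by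
  intro u u' w
  induction w with
  | nil => exact fun _ h => h
  | @cons a b c h w ih =>
    rintro hts ⟨p, hp, hp1, hat⟩
    rw [Walk.support_cons, List.mem_cons, not_or] at hts
    have hbt : b ≠ t := fun hb => hts.2 (hb ▸ w.start_mem_support)
    obtain ⟨q, hq, hq1⟩ := aux_step p hp hp1 hat h hbt
    exact ih hts.2 ⟨q, hq, hq1, hbt⟩

end Aux

/-- If t is a join node of a tree decomposition of G rooted at ρ, with children t₁, t₂
(its only descendants among its neighbours) satisfying V_t = V_{t₁} = V_{t₂}, then
H_t = H_{t₁} ∪ H_{t₂}, the sets H_{t₁}, H_{t₂} are disjoint, and no edge of G joins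
H_{t₁} to H_{t₂}. -/
theorem stmt7 {V ι : Type} (G : SimpleGraph V) (D : TreeDecomp G ι) (ρ t t₁ t₂ : ι)
    (h1 : D.tree.Adj t t₁) (h2 : D.tree.Adj t t₂) (hne : t₁ ≠ t₂)
    (hd1 : t₁ ∈ Desc D ρ t) (hd2 : t₂ ∈ Desc D ρ t)
    (hchild : ∀ u, D.tree.Adj t u → u ∈ Desc D ρ t → u = t₁ ∨ u = t₂)
    (hb1 : D.bag t₁ = D.bag t) (hb2 : D.bag t₂ = D.bag t) :
    Hset D ρ t = Hset D ρ t₁ ∪ Hset D ρ t₂ ∧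
      Disjoint (Hset D ρ t₁) (Hset D ρ t₂) ∧
      ∀ a ∈ Hset D ρ t₁, ∀ b ∈ Hset D ρ t₂, ¬ G.Adj a b := by
  classical
  have hu := D.isTree.existsUnique_path
  let P : ∀ v w : ι, D.tree.Walk v w := fun v w => (hu v w).choose
  have hP : ∀ v w : ι, (P v w).IsPath := fun v w => (hu v w).choose_spec.1
  have hPu : ∀ {v w : ι} (p : D.tree.Walk v w), p.IsPath → p = P v w :=
    fun p hp => (hu _ _).choose_spec.2 p hp
  -- characterization of Desc
  have hdesc : ∀ t' u : ι, u ∈ Desc D ρ t' ↔ u ≠ t' ∧ t' ∈ (P ρ u).support := by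
    intro t' u
    constructor
    · rintro ⟨ha, hb⟩; exact ⟨ha, hb _ (hP ρ u)⟩
    · rintro ⟨ha, hb⟩
      exact ⟨ha, fun p hp => by rw [hPu p hp]; exact hb⟩
  -- main structure lemma : each descendant of t lies behind a unique neighbour of t
  have main : ∀ u ∈ Desc D ρ t, ∃ s, D.tree.Adj t s ∧ s ∈ Desc D ρ t ∧
      s ∈ (P ρ u).support ∧ (∃ Q : D.tree.Walk t u, Q.IsPath ∧ Q.getVert 1 = s ∧
        (∀ x, x ∈ (P ρ u).support → x ∈ (P ρ t).support ∨ x ∈ Q.support)) := by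
    intro u hu'
    obtain ⟨hunet, htsupp⟩ := (hdesc t u).mp hu'
    have hpaths := hP ρ u
    set A := (P ρ u).takeUntil t htsupp with hAdef
    set Q := (P ρ u).dropUntil t htsupp with hQdef
    have hApath : A.IsPath := hpaths.takeUntil htsupp
    have hQpath : Q.IsPath := hpaths.dropUntil htsupp
    have hQnil : ¬ Q.Nil := Walk.not_nil_of_ne (Ne.symm hunet)
    have hadj : D.tree.Adj t (Q.getVert 1) := Q.adj_snd hQnil
    set s := Q.getVert 1 with hsdef
    have hst : s ≠ t := hadj.ne'
    have hsQ : s ∈ Q.support := by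
      rw [Walk.mem_support_iff_exists_getVert]
      exact ⟨1, rfl, Walk.not_nil_iff_lt_length.mp hQnil⟩
    have hsP : s ∈ (P ρ u).support := Walk.support_dropUntil_subset _ htsupp hsQ
    have hsplit : A.append Q = P ρ u := (P ρ u).take_spec htsupp
    have hsA : s ∉ A.support := by
      intro hsA
      have hsupp : (P ρ u).support = A.support ++ Q.support.tail := by
        rw [← hsplit, Walk.support_append]
      have hnodup := hpaths.support_nodup
      rw [hsupp] at hnodup
      have hstail : s ∈ Q.support.tail := by
        have := Q.support_eq_cons
        rw [this, List.mem_cons] at hsQ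
        exact hsQ.resolve_left hst
      exact List.disjoint_of_nodup_append hnodup hsA hstail
    have hAP : A = P ρ t := hPu A hApath
    have hApath' : (A.concat hadj).IsPath := aux_concat_path hApath hadj hsA
    have hsdesc : s ∈ Desc D ρ t := by
      refine ⟨hst, fun p hp => ?_⟩
      have hpe : p = P ρ s := hPu p hp
      have hce : A.concat hadj = P ρ s := hPu _ hApath'
      rw [hpe, ← hce, Walk.concat_eq_append, Walk.mem_support_append_iff]
      exact Or.inl A.end_mem_support
    refine ⟨s, hadj, hsdesc, hsP, Q, hQpath, rfl, ?_⟩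
    intro x hx
    rw [← hsplit, Walk.mem_support_append_iff] at hx
    rcases hx with hx | hx
    · exact Or.inl (hAP ▸ hx)
    · exact Or.inr hx
  -- descendants of a child are descendants of t
  have descF4 : ∀ {c : ι}, D.tree.Adj t c → c ∈ Desc D ρ t → Desc D ρ c ⊆ Desc D ρ t := by
    intro c hadj hcdesc u hu'
    obtain ⟨hunec, hcsupp⟩ := (hdesc c u).mp hu'
    obtain ⟨_, htc⟩ := (hdesc t c).mp hcdesc
    have hunet : u ≠ t := fun he =>
      hadj.ne (aux_mutual hu (hP ρ t) (hP ρ c) htc (he ▸ hcsupp))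
    refine (hdesc t u).mpr ⟨hunet, ?_⟩
    have h3 : (P ρ u).takeUntil c hcsupp = P ρ c := hPu _ ((hP ρ u).takeUntil hcsupp)
    have htc' : t ∈ ((P ρ u).takeUntil c hcsupp).support := by rw [h3]; exact htc
    exact Walk.support_takeUntil_subset (P ρ u) hcsupp htc'
  -- every descendant of child c lies on the c side
  have descSide : ∀ {c u : ι}, D.tree.Adj t c → c ∈ Desc D ρ t → u ∈ Desc D ρ c →
      ∃ Q : D.tree.Walk t u, Q.IsPath ∧ Q.getVert 1 = c := by
    intro c u hadj hcdesc hu'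
    have hut : u ∈ Desc D ρ t := descF4 hadj hcdesc hu'
    obtain ⟨s, hsadj, hsdesc, hsP, Q, hQp, hQ1, hcover⟩ := main u hut
    obtain ⟨hunec, hcsupp⟩ := (hdesc c u).mp hu'
    obtain ⟨hcnet, htc⟩ := (hdesc t c).mp hcdesc
    have hcQ : c ∈ Q.support := by
      rcases hcover c hcsupp with hcA | hcQ
      · exact absurd (aux_mutual hu (hP ρ t) (hP ρ c) htc hcA) hadj.ne
      · exact hcQ
    -- the unique path from t to c is the single edge; compare with Q.takeUntil c
    have htake : Q.takeUntil c hcQ = Walk.cons hadj Walk.nil := by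
      refine (hu t c).unique (hQp.takeUntil hcQ) ?_
      rw [Walk.cons_isPath_iff]
      exact ⟨Walk.IsPath.nil, by simp [hadj.ne]⟩
    have := aux_getVert_takeUntil Q hcQ hcnet
    rw [htake] at this
    have hcs : c = s := by
      rw [← hQ1, ← this]
      simp [Walk.getVert_cons_succ, Walk.getVert_zero]
    exact ⟨Q, hQp, by rw [hQ1, hcs]⟩
  -- splitting descendants of t
  have hsub : ∀ u ∈ Desc D ρ t, u = t₁ ∨ u = t₂ ∨ u ∈ Desc D ρ t₁ ∨ u ∈ Desc D ρ t₂ := by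
    intro u hu'
    obtain ⟨s, hsadj, hsdesc, hsP, _Q, _, _, _⟩ := main u hu'
    by_cases hu1 : u = t₁
    · exact Or.inl hu1
    by_cases hu2 : u = t₂
    · exact Or.inr (Or.inl hu2)
    rcases hchild s hsadj hsdesc with rfl | rfl
    · exact Or.inr (Or.inr (Or.inl ((hdesc s u).mpr ⟨hu1, hsP⟩)))
    · exact Or.inr (Or.inr (Or.inr ((hdesc s u).mpr ⟨hu2, hsP⟩)))
  -- sides are unique
  have hside_unique : ∀ {i : ι} (q q' : D.tree.Walk t i), q.IsPath → q'.IsPath →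
      q.getVert 1 = t₁ → q'.getVert 1 = t₂ → False := by
    intro i q q' hq hq' e1 e2
    exact hne (by rw [← e1, (hu t i).unique hq hq', e2])
  -- connectivity transfer: any bag containing a vertex from H-side of c is on side c
  have reach_side : ∀ (v' : V) (c : ι), D.tree.Adj t c → c ∈ Desc D ρ t →
      ∀ u₁ ∈ Desc D ρ c, v' ∈ D.bag u₁ → v' ∉ D.bag t → ∀ i, v' ∈ D.bag i →
      ∃ q : D.tree.Walk t i, q.IsPath ∧ q.getVert 1 = c := by
    intro v' c hadj hcdesc u₁ hu₁ hv1 hvt i hvi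
    obtain ⟨Q, hQp, hQ1⟩ := descSide hadj hcdesc hu₁
    have hu1t : u₁ ≠ t := ((descF4 hadj hcdesc) hu₁).1
    have hreach := (D.conn_bag v').preconnected ⟨u₁, hv1⟩ ⟨i, hvi⟩
    obtain ⟨w⟩ := hreach
    have htw : t ∉ (w.map (SimpleGraph.Embedding.induce {j | v' ∈ D.bag j}).toHom).support := by
      rw [Walk.support_map]
      intro hmem
      obtain ⟨⟨j, hj⟩, hjs, hjt⟩ := List.mem_map.mp hmem
      have hjt' : j = t := hjt
      exact hvt (hjt' ▸ hj)
    obtain ⟨q, hq, hq1, _⟩ := aux_walk_side _ htw ⟨Q, hQp, hQ1, hu1t⟩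
    exact ⟨q, hq, hq1⟩
  -- Part 1
  have hset_eq : Hset D ρ t = Hset D ρ t₁ ∪ Hset D ρ t₂ := by
    ext v
    simp only [Hset, Set.mem_diff, Set.mem_union, Set.mem_iUnion, exists_prop]
    constructor
    · rintro ⟨⟨w, hw, hv⟩, hvt⟩
      rcases hsub w hw with rfl | rfl | h | h
      · exact absurd (hb1 ▸ hv) hvt
      · exact absurd (hb2 ▸ hv) hvt
      · exact Or.inl ⟨⟨w, h, hv⟩, by rw [hb1]; exact hvt⟩
      · exact Or.inr ⟨⟨w, h, hv⟩, by rw [hb2]; exact hvt⟩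
    · rintro (⟨⟨w, h, hv⟩, hvt⟩ | ⟨⟨w, h, hv⟩, hvt⟩)
      · exact ⟨⟨w, descF4 h1 hd1 h, hv⟩, by rw [← hb1]; exact hvt⟩
      · exact ⟨⟨w, descF4 h2 hd2 h, hv⟩, by rw [← hb2]; exact hvt⟩
  refine ⟨hset_eq, ?_, ?_⟩
  · -- disjointness
    rw [Set.disjoint_left]
    intro v hv1 hv2
    simp only [Hset, Set.mem_diff, Set.mem_iUnion, exists_prop] at hv1 hv2
    obtain ⟨⟨u₁, hu₁, hvb1⟩, hvnb1⟩ := hv1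
    obtain ⟨⟨u₂, hu₂, hvb2⟩, hvnb2⟩ := hv2
    have hvt : v ∉ D.bag t := by rw [← hb1]; exact hvnb1
    obtain ⟨q, hq, hq1⟩ := reach_side v t₁ h1 hd1 u₁ hu₁ hvb1 hvt u₂ hvb2
    obtain ⟨q', hq', hq1'⟩ := reach_side v t₂ h2 hd2 u₂ hu₂ hvb2 hvt u₂ hvb2
    exact hside_unique q q' hq hq' hq1 hq1'
  · -- no edge between the two sides
    intro a ha b hb hab
    simp only [Hset, Set.mem_diff, Set.mem_iUnion, exists_prop] at ha hb
    obtain ⟨⟨u₁, hu₁, hab1⟩, hanb1⟩ := ha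
    obtain ⟨⟨u₂, hu₂, hbb2⟩, hbnb2⟩ := hb
    obtain ⟨i, hai, hbi⟩ := D.edge_bag hab
    have hat : a ∉ D.bag t := by rw [← hb1]; exact hanb1
    have hbt : b ∉ D.bag t := by rw [← hb2]; exact hbnb2
    obtain ⟨q, hq, hq1⟩ := reach_side a t₁ h1 hd1 u₁ hu₁ hab1 hat i hai
    obtain ⟨q', hq', hq1'⟩ := reach_side b t₂ h2 hd2 u₂ hu₂ hbb2 hbt i hbi
    exact hside_unique q q' hq hq' hq1 hq1'
end
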